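/- arXiv:1810.12197 — 3 statements merged into one kernel-verified Lean document; each statement's English description precedes it below -/
import Mathlib

section
/- Let {P_z}_{z=1}^t be rank-one projectors on a d-dimensional Hilbert space B forming a state two-design, i.e., (1/t)·Σ_z P_z ⊗ P_z = 2·P_sym/(d(d+1)) where P_sym projects onto the symmetric subspace of B⊗B. Define the measurement channel M_B(X) = Σ_z (d/t)·Tr[P_z X]·|z⟩⟨z|. Then for any finite-dimensional system A and any Hermitian ξ_{AB} on A⊗B, ‖(I_A ⊗ M_B)(ξ_{AB})‖₁ ≥ (1/(d²(d+1)))·‖ξ_{AB}‖₁. -/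
open Matrix Kronecker
open scoped ComplexOrder

/-- `√(M Mᴴ)`, the positive semidefinite absolute value of a matrix. -/
noncomputable def absM {n : Type*} [Fintype n] [DecidableEq n] (M : Matrix n n ℂ) :
    Matrix n n ℂ :=
  (Matrix.posSemidef_self_mul_conjTranspose M).1.eigenvectorUnitary.1 *
    diagonal ((↑) ∘ (√·) ∘ (Matrix.posSemidef_self_mul_conjTranspose M).1.eigenvalues) *
    (star (Matrix.posSemidef_self_mul_conjTranspose M).1.eigenvectorUnitary : Matrix n n ℂ)

/-- The trace norm `‖M‖₁ = Tr √(M Mᴴ)`. -/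
noncomputable def traceNorm {n : Type*} [Fintype n] [DecidableEq n] (M : Matrix n n ℂ) : ℝ :=
  (absM M).trace.re

/-- Partial trace over the second (B) tensor factor. -/
noncomputable def ptraceB {A B : Type*} [Fintype A] [Fintype B]
    (M : Matrix (A × B) (A × B) ℂ) : Matrix A A ℂ :=
  Matrix.of fun i j => ∑ k : B, M (i, k) (j, k)

/-- The swap operator F on B⊗B. -/
def swapOp (B : Type*) [DecidableEq B] : Matrix (B × B) (B × B) ℂ :=
  Matrix.of fun p q => if p.1 = q.2 ∧ p.2 = q.1 then 1 else 0

/-- The measurement channel (with side information) of the POVM `{(d/t)·P_z}`: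
`(I_A ⊗ M_B)(ξ) = Σ_z (d/t)·(Tr_B[(1_A ⊗ P_z) ξ]) ⊗ |z⟩⟨z|`, as a matrix on A ⊗ ℂ^t. -/
noncomputable def measOut {A B : Type*} [Fintype A] [DecidableEq A] [Fintype B] [DecidableEq B] (t : ℕ)
    (P : Fin t → Matrix B B ℂ) (ξ : Matrix (A × B) (A × B) ℂ) :
    Matrix (A × Fin t) (A × Fin t) ℂ :=
  Matrix.of fun p q =>
    if p.2 = q.2 then
      ((Fintype.card B : ℂ) / t) * (ptraceB (((1 : Matrix A A ℂ) ⊗ₖ P p.2) * ξ)) p.1 q.1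
    else 0

section
open scoped MatrixOrder

lemma absM_eq_sqrt {n : Type*} [Fintype n] [DecidableEq n] (M : Matrix n n ℂ) :
    absM M = CFC.sqrt (M * Mᴴ) := by
  have h0 : (0 : Matrix n n ℂ) ≤ M * Mᴴ :=
    Matrix.nonneg_iff_posSemidef.mpr (Matrix.posSemidef_self_mul_conjTranspose M)
  rw [CFC.sqrt_eq_real_sqrt _ h0, cfcₙ_eq_cfc, (Matrix.posSemidef_self_mul_conjTranspose M).1.cfc_eq]
  rfl

lemma absM_posSemidef {n : Type*} [Fintype n] [DecidableEq n] (M : Matrix n n ℂ) :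
    (absM M).PosSemidef := by
  rw [absM_eq_sqrt, ← Matrix.nonneg_iff_posSemidef]
  exact CFC.sqrt_nonneg _

lemma absM_sq {n : Type*} [Fintype n] [DecidableEq n] (M : Matrix n n ℂ) :
    absM M ^ 2 = M * Mᴴ := by
  rw [absM_eq_sqrt]
  exact CFC.sq_sqrt _ (Matrix.nonneg_iff_posSemidef.mpr (Matrix.posSemidef_self_mul_conjTranspose M))

lemma eq_absM_of_sq_eq {n : Type*} [Fintype n] [DecidableEq n] {M S : Matrix n n ℂ}
    (hS : S.PosSemidef) (h : S ^ 2 = M * Mᴴ) : S = absM M := by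
  rw [absM_eq_sqrt]
  exact (CFC.sqrt_unique (by rw [← pow_two, h]) (Matrix.nonneg_iff_posSemidef.mpr hS)).symm

lemma psd_eq_conjTranspose_mul_self {n : Type*} [Fintype n] [DecidableEq n] {ρ : Matrix n n ℂ}
    (hρ : ρ.PosSemidef) : ∃ L : Matrix n n ℂ, ρ = Lᴴ * L := by
  have h0 : (0 : Matrix n n ℂ) ≤ ρ := Matrix.nonneg_iff_posSemidef.mpr hρ
  refine ⟨CFC.sqrt ρ, ?_⟩
  rw [← Matrix.star_eq_conjTranspose, (CFC.sqrt_nonneg ρ).isSelfAdjoint.star_eq,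
    CFC.sqrt_mul_sqrt_self ρ h0]

end

lemma herm_package {n : Type*} [Fintype n] [DecidableEq n] {M : Matrix n n ℂ}
    (hM : M.IsHermitian) :
    ∃ W Pp Pm : Matrix n n ℂ, Wᴴ * W = 1 ∧ Pp.PosSemidef ∧ Pm.PosSemidef ∧
      M = Pp - Pm ∧ (W * M).trace = (traceNorm M : ℂ) ∧
      (traceNorm M : ℂ) = Pp.trace + Pm.trace := by
  classical
  set U : Matrix n n ℂ := (hM.eigenvectorUnitary : Matrix n n ℂ) with hU
  set lam : n → ℝ := hM.eigenvalues with hlam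
  have hUU : (star U) * U = 1 := Matrix.mem_unitaryGroup_iff'.mp hM.eigenvectorUnitary.2
  have hUUs : U * star U = 1 := Matrix.mem_unitaryGroup_iff.mp hM.eigenvectorUnitary.2
  set Cj : (n → ℝ) → Matrix n n ℂ := fun v => U * Matrix.diagonal (fun i => (v i : ℂ)) * star U with hCj
  have hDD : ∀ v w : n → ℝ, (Matrix.diagonal fun i => ((v i : ℝ) : ℂ)) * (Matrix.diagonal fun i => ((w i : ℝ):ℂ))
      = Matrix.diagonal fun i => ((v i * w i : ℝ) : ℂ) := by
    intro v w
    rw [diagonal_mul_diagonal]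
    push_cast
    rfl
  have hmul : ∀ v w, Cj v * Cj w = Cj (fun i => v i * w i) := by
    intro v w
    simp only [hCj, Matrix.mul_assoc]
    rw [← Matrix.mul_assoc (star U) U, hUU, Matrix.one_mul, ← Matrix.mul_assoc (Matrix.diagonal _), hDD]
  have htr : ∀ v, (Cj v).trace = ((∑ i, v i : ℝ) : ℂ) := by
    intro v
    simp only [hCj]
    rw [Matrix.trace_mul_cycle, hUU, Matrix.one_mul, trace_diagonal]
    push_cast
    rfl
  have hpsd : ∀ v, (∀ i, 0 ≤ v i) → (Cj v).PosSemidef := by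
    intro v hv
    have : PosSemidef (Matrix.diagonal (fun i => (v i : ℂ))) :=
      posSemidef_diagonal_iff.mpr fun i => by exact_mod_cast Complex.zero_le_real.mpr (hv i)
    exact this.mul_mul_conjTranspose_same U
  have hherm : ∀ v, (Cj v)ᴴ = Cj v := by
    intro v
    have hD : (Matrix.diagonal fun i : n => ((v i : ℝ) : ℂ))
        = (Matrix.diagonal fun i : n => ((v i : ℝ) : ℂ))ᴴ := by
      have h0 : (star fun i : n => ((v i : ℝ) : ℂ)) = fun i : n => ((v i : ℝ) : ℂ) := by
        funext i
        exact Complex.conj_ofReal _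
      rw [diagonal_conjTranspose, h0]
    simp only [hCj, Matrix.star_eq_conjTranspose, conjTranspose_mul,
      conjTranspose_conjTranspose, Matrix.mul_assoc]
    rw [← hD]
  have hMeq : M = Cj lam := by
    have h := hM.spectral_theorem
    rw [Unitary.conjStarAlgAut_apply] at h
    exact h
  have hsub : ∀ v w, Cj v - Cj w = Cj (fun i => v i - w i) := by
    intro v w
    simp only [hCj]
    rw [← Matrix.sub_mul, ← Matrix.mul_sub, diagonal_sub]
    push_cast
    rfl
  have habs : absM M = Cj (fun i => |lam i|) := by
    refine (eq_absM_of_sq_eq (hpsd _ fun i => abs_nonneg _) ?_).symm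
    rw [pow_two, hmul]
    have : (fun i => |lam i| * |lam i|) = fun i => lam i * lam i := by
      funext i; exact abs_mul_abs_self _
    rw [this, ← hmul, ← hMeq, hM.eq]
  have hTN : traceNorm M = ∑ i, |lam i| := by
    rw [traceNorm, habs, htr]
    simp
  refine ⟨Cj (fun i => if lam i < 0 then -1 else 1), Cj (fun i => max (lam i) 0),
    Cj (fun i => max (-lam i) 0), ?_, hpsd _ fun i => le_max_right _ _,
    hpsd _ fun i => le_max_right _ _, ?_, ?_, ?_⟩
  · rw [hherm, hmul]
    have : (fun i => (if lam i < 0 then (-1:ℝ) else 1) * (if lam i < 0 then -1 else 1))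
        = fun _ => (1:ℝ) := by funext i; split <;> norm_num
    rw [this]
    simp only [hCj, Complex.ofReal_one, diagonal_one, Matrix.mul_one, hUUs]
  · rw [hsub]
    have : (fun i => max (lam i) 0 - max (-lam i) 0) = lam := by
      funext i
      rcases le_or_gt 0 (lam i) with h | h
      · rw [max_eq_left h, max_eq_right (neg_nonpos_of_nonneg h), sub_zero]
      · rw [max_eq_right h.le, max_eq_left (by linarith : (0:ℝ) ≤ -lam i), zero_sub, neg_neg]
    rw [this, ← hMeq]
  · have h1 : Cj (fun i => if lam i < 0 then -1 else 1) * M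
        = Cj (fun i => (if lam i < 0 then (-1:ℝ) else 1) * lam i) := by
      conv_lhs => rw [hMeq]
      rw [hmul]
    rw [h1, htr, hTN]
    norm_cast
    refine Finset.sum_congr rfl fun i _ => ?_
    rcases lt_or_ge (lam i) 0 with h | h
    · simp [h, abs_of_neg h]
    · simp [not_lt.mpr h, abs_of_nonneg h]
  · rw [hTN, htr, htr, ← Complex.ofReal_add, ← Finset.sum_add_distrib]
    norm_cast
    refine Finset.sum_congr rfl fun i _ => ?_
    rcases le_or_gt 0 (lam i) with h | h
    · rw [abs_of_nonneg h, max_eq_left h, max_eq_right (neg_nonpos_of_nonneg h), add_zero]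
    · rw [abs_of_neg h, max_eq_right h.le, max_eq_left (by linarith : (0:ℝ) ≤ -lam i), zero_add]

lemma cs_dot {n : Type*} [Fintype n] (u v : n → ℂ) :
    ‖dotProduct (star u) v‖
      ≤ Real.sqrt (dotProduct (star u) u).re * Real.sqrt (dotProduct (star v) v).re := by
  classical
  set u' : EuclideanSpace ℂ n := (WithLp.equiv 2 _).symm u
  set v' : EuclideanSpace ℂ n := (WithLp.equiv 2 _).symm v
  have h1 : inner ℂ u' v' = dotProduct (star u) v :=
    (EuclideanSpace.inner_toLp_toLp u v).trans (dotProduct_comm _ _)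
  have h2 : inner ℂ u' u' = dotProduct (star u) u :=
    (EuclideanSpace.inner_toLp_toLp u u).trans (dotProduct_comm _ _)
  have h3 : inner ℂ v' v' = dotProduct (star v) v :=
    (EuclideanSpace.inner_toLp_toLp v v).trans (dotProduct_comm _ _)
  have := norm_inner_le_norm (𝕜 := ℂ) u' v'
  rw [norm_eq_sqrt_re_inner (𝕜 := ℂ) u', norm_eq_sqrt_re_inner (𝕜 := ℂ) v', h1, h2, h3] at this
  simpa using this

lemma trace_mul_psd {n : Type*} [Fintype n] [DecidableEq n] (C ρ : Matrix n n ℂ)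
    (hρ : ρ.PosSemidef) (c : ℝ)
    (hC : ∀ x : n → ℂ, |(dotProduct (star x) (C *ᵥ x)).re| ≤ c * (dotProduct (star x) x).re) :
    |(C * ρ).trace.re| ≤ c * ρ.trace.re := by
  classical
  obtain ⟨L, rfl⟩ := psd_eq_conjTranspose_mul_self hρ
  have key : (C * (Lᴴ * L)).trace = ∑ i, dotProduct (star fun j => star (L i j)) (C *ᵥ (fun j => star (L i j))) := by
    rw [← Matrix.mul_assoc, Matrix.trace_mul_cycle (A := C) (B := Lᴴ) (C := L)]
    simp only [Matrix.trace, Matrix.diag_apply, Matrix.mul_apply, Matrix.conjTranspose_apply,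
      dotProduct, Matrix.mulVec, Pi.star_apply, star_star]
    refine Finset.sum_congr rfl fun i _ => ?_
    simp only [Finset.sum_mul, Finset.mul_sum]
    rw [Finset.sum_comm]
    exact Finset.sum_congr rfl fun j _ => Finset.sum_congr rfl fun k _ => by ring
  have key2 : (Lᴴ * L).trace.re = ∑ i, (dotProduct (star fun j => star (L i j)) (fun j => star (L i j))).re := by
    simp only [Matrix.trace, Matrix.diag_apply, Matrix.mul_apply, Matrix.conjTranspose_apply,
      dotProduct, Pi.star_apply, star_star, Complex.re_sum]
    rw [Finset.sum_comm]
    refine Finset.sum_congr rfl fun i _ => Finset.sum_congr rfl fun j _ => ?_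
    rw [mul_comm]
  calc |(C * (Lᴴ * L)).trace.re| = |∑ i, (dotProduct (star fun j => star (L i j)) (C *ᵥ (fun j => star (L i j)))).re| := by
        rw [key, Complex.re_sum]
    _ ≤ ∑ i, |(dotProduct (star fun j => star (L i j)) (C *ᵥ (fun j => star (L i j)))).re| :=
        Finset.abs_sum_le_sum_abs _ _
    _ ≤ ∑ i, c * (dotProduct (star fun j => star (L i j)) (fun j => star (L i j))).re :=
        Finset.sum_le_sum fun i _ => hC _
    _ = c * (Lᴴ * L).trace.re := by rw [key2, Finset.mul_sum]

lemma psd_diag_nonneg {n : Type*} [Fintype n] [DecidableEq n] {M : Matrix n n ℂ}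
    (hM : M.PosSemidef) (b : n) : 0 ≤ M b b := by
  exact hM.diag_nonneg

lemma traceNorm_nonneg {n : Type*} [Fintype n] [DecidableEq n] (M : Matrix n n ℂ) :
    0 ≤ traceNorm M := by
  have h := absM_posSemidef M
  rw [traceNorm, Matrix.trace, Complex.re_sum]
  exact Finset.sum_nonneg fun i _ => (Complex.le_def.mp (psd_diag_nonneg h i)).1

/-- Measurement distortion with quantum side information for a state two-design:
if `{P_z}` is a state two-design on B (dim B = d), then for any system A and Hermitian ξ on A⊗B,
`‖(I_A ⊗ M_B)(ξ)‖₁ ≥ ‖ξ‖₁ / (d²(d+1))`. -/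
theorem traceNorm_measOut_ge_of_two_design {A B : Type*} [Fintype A] [DecidableEq A]
    [Fintype B] [DecidableEq B] (t : ℕ) (P : Fin t → Matrix B B ℂ)
    (hproj : ∀ z, (P z).IsHermitian ∧ P z * P z = P z ∧ (P z).trace = 1)
    (hdesign : ((t : ℂ))⁻¹ • ∑ z, (P z) ⊗ₖ (P z) =
      (((Fintype.card B : ℂ) * ((Fintype.card B : ℂ) + 1)))⁻¹ •
        ((1 : Matrix (B × B) (B × B) ℂ) + swapOp B))
    (ξ : Matrix (A × B) (A × B) ℂ) (hξ : ξ.IsHermitian) :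
    traceNorm (measOut t P ξ) ≥
      (((Fintype.card B : ℝ))^2 * ((Fintype.card B : ℝ) + 1))⁻¹ * traceNorm ξ := by
  classical
  by_cases hd0 : Fintype.card B = 0
  · rw [hd0]
    norm_num
    exact traceNorm_nonneg _
  have hd1 : 1 ≤ Fintype.card B := Nat.one_le_iff_ne_zero.mpr hd0
  set dC : ℂ := (Fintype.card B : ℂ) with hdC
  set dR : ℝ := (Fintype.card B : ℝ) with hdR
  have hdR1 : 1 ≤ dR := by rw [hdR]; exact_mod_cast hd1
  have hdCne : dC ≠ 0 := by
    simp only [hdC, Ne, Nat.cast_eq_zero]; exact hd0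
  have hdC1ne : dC + 1 ≠ 0 := by
    have : ((Fintype.card B + 1 : ℕ) : ℂ) ≠ 0 := Nat.cast_ne_zero.mpr (Nat.succ_ne_zero _)
    simpa [hdC] using this
  -- the measurement blocks
  set xiz : Fin t → Matrix A A ℂ := fun z => Matrix.of fun i j =>
    (dC / t) * (ptraceB (((1 : Matrix A A ℂ) ⊗ₖ P z) * ξ)) i j with hxiz
  have hmeas : measOut t P ξ = Matrix.blockDiagonal xiz := by
    ext ⟨i, z⟩ ⟨j, z'⟩
    by_cases h : z = z' <;> simp [measOut, Matrix.blockDiagonal_apply, hxiz, h, hdC]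
  -- entry formula for the blocks
  have hptr : ∀ (z : Fin t) (i j : A), (ptraceB (((1 : Matrix A A ℂ) ⊗ₖ P z) * ξ)) i j
      = ∑ k : B, ∑ k' : B, P z k k' * ξ (i, k') (j, k) := by
    intro z i j
    simp only [ptraceB, Matrix.of_apply, Matrix.mul_apply, Fintype.sum_prod_type,
      Matrix.kroneckerMap_apply, Matrix.one_apply, ite_mul, one_mul, zero_mul]
    refine Finset.sum_congr rfl fun k _ => ?_
    rw [Finset.sum_comm]
    simp [Finset.sum_ite_eq]
  -- design identity entrywise
  have hdes : ∀ k b k' b' : B, ((t:ℂ))⁻¹ * (∑ z, P z k k' * P z b b')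
      = (dC * (dC+1))⁻¹ * ((if k = k' ∧ b = b' then 1 else 0)
          + (if k = b' ∧ b = k' then 1 else 0)) := by
    intro k b k' b'
    have h := congrFun (congrFun hdesign (k, b)) (k', b')
    simpa [Matrix.smul_apply, Matrix.sum_apply, Matrix.kroneckerMap_apply, Matrix.add_apply,
      Matrix.one_apply, swapOp, Matrix.of_apply, smul_eq_mul, Prod.mk.injEq, hdC] using h
  -- key averaging identity
  have hA1 : ∀ (i j : A) (b b' : B), (∑ z, xiz z i j * P z b b')
      = (dC+1)⁻¹ * ((if b = b' then ptraceB ξ i j else 0) + ξ (i, b) (j, b')) := by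
    intro i j b b'
    have hco : dC * (dC * (dC+1))⁻¹ = (dC+1)⁻¹ := by
      field_simp
    have swap3 : ∀ f : Fin t → B → B → ℂ,
        ∑ z, ∑ k, ∑ k', f z k k' = ∑ k, ∑ k', ∑ z, f z k k' := by
      intro f
      rw [Finset.sum_comm]
      exact Finset.sum_congr rfl fun k _ => Finset.sum_comm
    calc ∑ z, xiz z i j * P z b b'
        = ∑ z, ∑ k, ∑ k', (dC * ((t:ℂ))⁻¹ * (P z k k' * P z b b')) * ξ (i, k') (j, k) := by
          refine Finset.sum_congr rfl fun z _ => ?_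
          simp only [hxiz, Matrix.of_apply, hptr z i j, div_eq_mul_inv, Finset.mul_sum,
            Finset.sum_mul]
          exact Finset.sum_congr rfl fun k _ => Finset.sum_congr rfl fun k' _ => by ring
      _ = ∑ k, ∑ k', (dC * (((t:ℂ))⁻¹ * ∑ z, P z k k' * P z b b')) * ξ (i, k') (j, k) := by
          rw [swap3]
          refine Finset.sum_congr rfl fun k _ => Finset.sum_congr rfl fun k' _ => ?_
          rw [← Finset.sum_mul]
          congr 1
          rw [Finset.mul_sum, Finset.mul_sum]
          exact Finset.sum_congr rfl fun z _ => by ring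
      _ = ∑ k, ∑ k', (dC * (dC * (dC+1))⁻¹) * ((if k = k' ∧ b = b' then ξ (i, k') (j, k) else 0)
            + (if k = b' ∧ b = k' then ξ (i, k') (j, k) else 0)) := by
          refine Finset.sum_congr rfl fun k _ => Finset.sum_congr rfl fun k' _ => ?_
          rw [hdes k b k' b']
          by_cases hc1 : k = k' ∧ b = b'
          · by_cases hc2 : k = b' ∧ b = k'
            · simp only [if_pos hc1, if_pos hc2]; ring
            · simp only [if_pos hc1, if_neg hc2]; ring
          · by_cases hc2 : k = b' ∧ b = k'
            · simp only [if_neg hc1, if_pos hc2]; ring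
            · simp only [if_neg hc1, if_neg hc2]; ring
      _ = (dC+1)⁻¹ * ((if b = b' then ptraceB ξ i j else 0) + ξ (i, b) (j, b')) := by
          rw [← hco]
          simp only [← Finset.mul_sum]
          congr 1
          simp only [Finset.sum_add_distrib]
          congr 1
          · by_cases hbb : b = b'
            · subst hbb
              simp only [and_true, if_true, ptraceB, Matrix.of_apply]
              refine Finset.sum_congr rfl fun k _ => ?_
              simp [Finset.sum_ite_eq]
            · simp [hbb]
          · simp only [ite_and, Finset.sum_ite_irrel, Finset.sum_ite_eq, Finset.sum_ite_eq',
              Finset.mem_univ, if_true, Finset.sum_const_zero]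
  -- the partial trace is the sum of blocks
  have hptr2 : ∀ i j : A, ptraceB ξ i j = ∑ z, xiz z i j := by
    intro i j
    have htrP : ∀ z : Fin t, ∑ b : B, P z b b = 1 := by
      intro z
      simpa [Matrix.trace, Matrix.diag] using (hproj z).2.2
    have h1 : ∀ z : Fin t, xiz z i j = ∑ b, xiz z i j * P z b b := by
      intro z
      rw [← Finset.mul_sum, htrP z, mul_one]
    calc ptraceB ξ i j = (dC+1)⁻¹ * ((dC+1) * ptraceB ξ i j) := by
          field_simp
      _ = ∑ b : B, (dC+1)⁻¹ * ((if b = b then ptraceB ξ i j else 0) + ξ (i, b) (j, b)) := by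
          simp only [if_pos rfl, eq_self_iff_true, if_true, ← Finset.mul_sum,
            Finset.sum_add_distrib, Finset.sum_const, Finset.card_univ, nsmul_eq_mul]
          have hsum : ∑ b : B, ξ (i, b) (j, b) = ptraceB ξ i j := by simp [ptraceB]
          rw [hsum]
          congr 1
          rw [← hdC]
          ring
      _ = ∑ b : B, ∑ z, xiz z i j * P z b b := by
          exact Finset.sum_congr rfl fun b _ => (hA1 i j b b).symm
      _ = ∑ z, ∑ b : B, xiz z i j * P z b b := Finset.sum_comm
      _ = ∑ z, xiz z i j := Finset.sum_congr rfl fun z _ => (h1 z).symm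
  -- reconstruction identity
  have hxi_e : ∀ (i j : A) (b b' : B), ξ (i, b) (j, b')
      = ∑ z, xiz z i j * ((dC+1) * P z b b' - (if b = b' then 1 else 0)) := by
    intro i j b b'
    have expand : ∑ z, xiz z i j * ((dC+1) * P z b b' - (if b = b' then 1 else 0))
        = (dC+1) * (∑ z, xiz z i j * P z b b')
          - (if b = b' then 1 else 0) * ∑ z, xiz z i j := by
      rw [Finset.mul_sum, Finset.mul_sum, ← Finset.sum_sub_distrib]
      exact Finset.sum_congr rfl fun z _ => by ring
    rw [expand, hA1 i j b b', ← hptr2 i j]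
    by_cases hbb : b = b'
    · simp only [hbb, if_true]
      field_simp
      ring
    · simp only [hbb, if_false]
      field_simp
      ring
  -- blocks are Hermitian
  have hxizH : ∀ z, (xiz z).IsHermitian := by
    intro z
    have hstarc : star (dC / (t:ℂ)) = dC / (t:ℂ) := by
      simp [hdC, div_eq_mul_inv]
    show (xiz z)ᴴ = xiz z
    ext i j
    simp only [Matrix.conjTranspose_apply, hxiz, Matrix.of_apply, hptr, star_mul', hstarc,
      star_sum]
    congr 1
    calc ∑ k, ∑ k', star (P z k k') * star (ξ (j, k') (i, k))
        = ∑ k, ∑ k', P z k' k * ξ (i, k) (j, k') := by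
          refine Finset.sum_congr rfl fun k _ => Finset.sum_congr rfl fun k' _ => ?_
          rw [(hproj z).1.apply k' k, hξ.apply (i, k) (j, k')]
      _ = ∑ k, ∑ k', P z k k' * ξ (i, k') (j, k) := Finset.sum_comm
  -- dual witness for ξ
  obtain ⟨W, Pp0, Pm0, hWW, _, _, _, hWtr, _⟩ := herm_package hξ
  set Cz : Fin t → Matrix A A ℂ := fun z => Matrix.of fun i j =>
    ∑ b : B, ∑ b' : B, W (i, b) (j, b') * ((dC+1) * P z b' b - (if b' = b then 1 else 0)) with hCz
  set cR : ℝ := dR^2 * (dR + 1) with hcR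
  have hcRpos : 0 < cR := by positivity
  have H4 : (W * ξ).trace = ∑ z, (Cz z * xiz z).trace := by
    have e1 : (W * ξ).trace = ∑ i : A, ∑ b : B, ∑ j : A, ∑ b' : B, ∑ z,
        W (i, b) (j, b') * (xiz z j i * ((dC+1) * P z b' b - (if b' = b then 1 else 0))) := by
      simp only [Matrix.trace, Matrix.diag_apply, Matrix.mul_apply, Fintype.sum_prod_type]
      refine Finset.sum_congr rfl fun i _ => Finset.sum_congr rfl fun b _ =>
        Finset.sum_congr rfl fun j _ => Finset.sum_congr rfl fun b' _ => ?_
      rw [hxi_e j i b' b, Finset.mul_sum]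
    have e2 : ∀ z, (Cz z * xiz z).trace = ∑ i : A, ∑ b : B, ∑ j : A, ∑ b' : B,
        W (i, b) (j, b') * (xiz z j i * ((dC+1) * P z b' b - (if b' = b then 1 else 0))) := by
      intro z
      calc (Cz z * xiz z).trace
          = ∑ i : A, ∑ j : A, ∑ b : B, ∑ b' : B,
              W (i, b) (j, b') * (xiz z j i * ((dC+1) * P z b' b - (if b' = b then 1 else 0))) := by
            simp only [Matrix.trace, Matrix.diag_apply, Matrix.mul_apply, hCz, Matrix.of_apply,
              Finset.sum_mul]
            refine Finset.sum_congr rfl fun i _ => Finset.sum_congr rfl fun j _ =>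
              Finset.sum_congr rfl fun b _ => Finset.sum_congr rfl fun b' _ => by ring
        _ = ∑ i : A, ∑ b : B, ∑ j : A, ∑ b' : B,
              W (i, b) (j, b') * (xiz z j i * ((dC+1) * P z b' b - (if b' = b then 1 else 0))) :=
            Finset.sum_congr rfl fun i _ => Finset.sum_comm
    rw [e1]
    calc ∑ i : A, ∑ b : B, ∑ j : A, ∑ b' : B, ∑ z,
          W (i, b) (j, b') * (xiz z j i * ((dC+1) * P z b' b - (if b' = b then 1 else 0)))
        = ∑ i : A, ∑ b : B, ∑ j : A, ∑ z, ∑ b' : B,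
          W (i, b) (j, b') * (xiz z j i * ((dC+1) * P z b' b - (if b' = b then 1 else 0))) := by
          refine Finset.sum_congr rfl fun i _ => Finset.sum_congr rfl fun b _ =>
            Finset.sum_congr rfl fun j _ => Finset.sum_comm
      _ = ∑ i : A, ∑ b : B, ∑ z, ∑ j : A, ∑ b' : B,
          W (i, b) (j, b') * (xiz z j i * ((dC+1) * P z b' b - (if b' = b then 1 else 0))) := by
          refine Finset.sum_congr rfl fun i _ => Finset.sum_congr rfl fun b _ => Finset.sum_comm
      _ = ∑ i : A, ∑ z, ∑ b : B, ∑ j : A, ∑ b' : B,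
          W (i, b) (j, b') * (xiz z j i * ((dC+1) * P z b' b - (if b' = b then 1 else 0))) := by
          refine Finset.sum_congr rfl fun i _ => Finset.sum_comm
      _ = ∑ z, ∑ i : A, ∑ b : B, ∑ j : A, ∑ b' : B,
          W (i, b) (j, b') * (xiz z j i * ((dC+1) * P z b' b - (if b' = b then 1 else 0))) :=
          Finset.sum_comm
      _ = ∑ z, (Cz z * xiz z).trace := Finset.sum_congr rfl fun z _ => (e2 z).symm
  have H5 : ∀ (z : Fin t) (x : A → ℂ),
      |(dotProduct (star x) (Cz z *ᵥ x)).re| ≤ cR * (dotProduct (star x) x).re := by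
    have hPP : ∀ z : Fin t, (P z)ᴴ * P z = P z := by
      intro z
      rw [(hproj z).1.eq]
      exact (hproj z).2.1
    have hPSD : ∀ z : Fin t, (P z).PosSemidef := by
      intro z
      have h := Matrix.posSemidef_conjTranspose_mul_self (P z)
      rwa [hPP z] at h
    have hdiag0 : ∀ (z : Fin t) (b : B), 0 ≤ (P z b b).re := by
      intro z b
      have h := Complex.le_def.mp (psd_diag_nonneg (hPSD z) b)
      simpa using h.1
    have hdiagim : ∀ (z : Fin t) (b : B), (P z b b).im = 0 := by
      intro z b
      have h := Complex.le_def.mp (psd_diag_nonneg (hPSD z) b)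
      simpa using h.2.symm
    have hdiag1 : ∀ (z : Fin t) (b : B), (P z b b).re ≤ 1 := by
      intro z b
      have htr : ∑ c : B, (P z c c).re = 1 := by
        have h := congrArg Complex.re (hproj z).2.2
        simpa [Matrix.trace, Matrix.diag, Complex.re_sum] using h
      calc (P z b b).re ≤ ∑ c : B, (P z c c).re :=
            Finset.single_le_sum (fun c _ => hdiag0 z c) (Finset.mem_univ b)
        _ = 1 := htr
    have hcol : ∀ (z : Fin t) (b : B),
        dotProduct (star fun k => P z k b) (fun k => P z k b) = P z b b := by
      intro z b
      have h := congrFun (congrFun (hPP z) b) b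
      simpa [Matrix.mul_apply, Matrix.conjTranspose_apply, dotProduct,
        Pi.star_apply] using h
    have hoff : ∀ (z : Fin t) (b b' : B), ‖P z b' b‖ ≤ 1 := by
      intro z b b'
      have he : P z b' b = dotProduct (star fun k => P z k b') (fun k => P z k b) := by
        have h := congrFun (congrFun (hPP z) b') b
        simp only [Matrix.mul_apply, Matrix.conjTranspose_apply] at h
        simp only [dotProduct, Pi.star_apply]
        exact h.symm
      rw [he]
      refine (cs_dot _ _).trans ?_
      rw [hcol z b', hcol z b]
      have h1 : Real.sqrt (P z b' b').re ≤ 1 := Real.sqrt_le_one.mpr (hdiag1 z b')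
      have h2 : Real.sqrt (P z b b).re ≤ 1 := Real.sqrt_le_one.mpr (hdiag1 z b)
      nlinarith [Real.sqrt_nonneg (P z b' b').re, Real.sqrt_nonneg (P z b b).re]
    have hQbound : ∀ (z : Fin t) (b b' : B),
        ‖(dC+1) * P z b' b - (if b' = b then 1 else 0)‖
          ≤ (dR+1) - (if b' = b then 1 else 0) := by
      intro z b b'
      by_cases hbe : b' = b
      · subst hbe
        rw [if_pos rfl, if_pos rfl]
        have hPr : P z b' b' = (((P z b' b').re : ℝ) : ℂ) := by
          apply Complex.ext <;> simp [hdiagim z b']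
        rw [hPr]
        have hc : (dC+1) * (((P z b' b').re : ℝ) : ℂ) - 1
            = (((dR+1) * (P z b' b').re - 1 : ℝ) : ℂ) := by
          rw [hdC, hdR]
          push_cast
          ring
        rw [hc, Complex.norm_real, Real.norm_eq_abs]
        have h0 := hdiag0 z b'
        have h1 := hdiag1 z b'
        refine abs_le.mpr ⟨?_, ?_⟩ <;> nlinarith [hdR1]
      · rw [if_neg hbe, if_neg hbe, sub_zero, sub_zero, norm_mul]
        have habs1 : ‖dC+1‖ = dR + 1 := by
          have hcc : dC + 1 = ((dR + 1 : ℝ) : ℂ) := by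
            rw [hdC, hdR]; push_cast; ring
          rw [hcc, Complex.norm_real, Real.norm_eq_abs, abs_of_nonneg (by linarith)]
        rw [habs1]
        have := hoff z b b'
        nlinarith [hdR1, norm_nonneg (P z b' b)]
    intro z x
    set u : B → (A × B → ℂ) := fun b => fun p => if p.2 = b then x p.1 else 0 with hu
    have hub : ∀ b b', dotProduct (star (u b)) (W *ᵥ (u b'))
        = ∑ i : A, ∑ j : A, star (x i) * (W (i, b) (j, b') * x j) := by
      intro b b'
      simp only [hu, dotProduct, Matrix.mulVec, Pi.star_apply, Fintype.sum_prod_type]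
      simp only [apply_ite, star_zero, mul_ite, mul_zero, ite_mul, zero_mul,
        Finset.sum_ite_eq, Finset.sum_ite_eq', Finset.mem_univ, if_true, Finset.mul_sum]
      refine Finset.sum_congr rfl fun i _ => ?_
      rw [Finset.sum_comm]
      simp [Finset.sum_ite_eq, Finset.sum_ite_eq']
    have huu : ∀ b, dotProduct (star (u b)) (u b) = dotProduct (star x) x := by
      intro b
      simp only [hu, dotProduct, Pi.star_apply, Fintype.sum_prod_type, apply_ite,
        star_zero, mul_ite, mul_zero, ite_mul, zero_mul, Finset.sum_ite_eq, Finset.sum_ite_eq',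
        Finset.mem_univ, if_true]
    have hWu : ∀ v : A × B → ℂ,
        dotProduct (star (W *ᵥ v)) (W *ᵥ v) = dotProduct (star v) v := by
      intro v
      rw [Matrix.star_mulVec, dotProduct_mulVec, Matrix.vecMul_vecMul, hWW,
        Matrix.vecMul_one]
    have hx0 : 0 ≤ (dotProduct (star x) x).re := by
      simp only [dotProduct, Pi.star_apply, Complex.re_sum]
      refine Finset.sum_nonneg fun i _ => ?_
      rw [Complex.star_def, mul_comm, Complex.mul_conj]
      simpa using Complex.normSq_nonneg (x i)
    have hSb : ∀ b b', ‖dotProduct (star (u b)) (W *ᵥ (u b'))‖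
        ≤ (dotProduct (star x) x).re := by
      intro b b'
      refine (cs_dot _ _).trans ?_
      rw [hWu (u b'), huu b, huu b', Real.mul_self_sqrt hx0]
    have hexp : dotProduct (star x) (Cz z *ᵥ x)
        = ∑ b : B, ∑ b' : B, ((dC+1) * P z b' b - (if b' = b then 1 else 0))
            * dotProduct (star (u b)) (W *ᵥ (u b')) := by
      calc dotProduct (star x) (Cz z *ᵥ x)
          = ∑ i : A, ∑ j : A, ∑ b : B, ∑ b' : B,
              ((dC+1) * P z b' b - (if b' = b then 1 else 0))
                * (star (x i) * (W (i, b) (j, b') * x j)) := by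
            simp only [dotProduct, Matrix.mulVec, hCz, Matrix.of_apply, Pi.star_apply,
              Finset.sum_mul, Finset.mul_sum]
            refine Finset.sum_congr rfl fun i _ => Finset.sum_congr rfl fun j _ =>
              Finset.sum_congr rfl fun b _ => Finset.sum_congr rfl fun b' _ => by ring
        _ = ∑ i : A, ∑ b : B, ∑ j : A, ∑ b' : B,
              ((dC+1) * P z b' b - (if b' = b then 1 else 0))
                * (star (x i) * (W (i, b) (j, b') * x j)) :=
            Finset.sum_congr rfl fun i _ => Finset.sum_comm
        _ = ∑ b : B, ∑ i : A, ∑ j : A, ∑ b' : B,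
              ((dC+1) * P z b' b - (if b' = b then 1 else 0))
                * (star (x i) * (W (i, b) (j, b') * x j)) := Finset.sum_comm
        _ = ∑ b : B, ∑ i : A, ∑ b' : B, ∑ j : A,
              ((dC+1) * P z b' b - (if b' = b then 1 else 0))
                * (star (x i) * (W (i, b) (j, b') * x j)) :=
            Finset.sum_congr rfl fun b _ => Finset.sum_congr rfl fun i _ => Finset.sum_comm
        _ = ∑ b : B, ∑ b' : B, ∑ i : A, ∑ j : A,
              ((dC+1) * P z b' b - (if b' = b then 1 else 0))
                * (star (x i) * (W (i, b) (j, b') * x j)) :=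
            Finset.sum_congr rfl fun b _ => Finset.sum_comm
        _ = ∑ b : B, ∑ b' : B, ((dC+1) * P z b' b - (if b' = b then 1 else 0))
              * dotProduct (star (u b)) (W *ᵥ (u b')) := by
            refine Finset.sum_congr rfl fun b _ => Finset.sum_congr rfl fun b' _ => ?_
            rw [hub b b', Finset.mul_sum]
            refine Finset.sum_congr rfl fun i _ => ?_
            rw [Finset.mul_sum]
    calc |(dotProduct (star x) (Cz z *ᵥ x)).re|
        ≤ ‖dotProduct (star x) (Cz z *ᵥ x)‖ := Complex.abs_re_le_norm _
      _ ≤ ∑ b : B, ∑ b' : B, ‖((dC+1) * P z b' b - (if b' = b then 1 else 0))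
            * dotProduct (star (u b)) (W *ᵥ (u b'))‖ := by
          rw [hexp]
          refine (norm_sum_le _ _).trans ?_
          exact Finset.sum_le_sum fun b _ => norm_sum_le _ _
      _ ≤ ∑ b : B, ∑ b' : B, ((dR+1) - (if b' = b then 1 else 0))
            * (dotProduct (star x) x).re := by
          refine Finset.sum_le_sum fun b _ => Finset.sum_le_sum fun b' _ => ?_
          rw [norm_mul]
          refine mul_le_mul (hQbound z b b') (hSb b b') (norm_nonneg _) ?_
          have : (0:ℝ) ≤ (if b' = b then (1:ℝ) else 0) := by split <;> norm_num
          split <;> nlinarith [hdR1]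
      _ = ((dR + 1) * (dR * dR) - dR) * (dotProduct (star x) x).re := by
          simp only [sub_mul, Finset.sum_sub_distrib, Finset.sum_const, Finset.card_univ,
            nsmul_eq_mul, ite_mul, one_mul, zero_mul, Finset.sum_ite_eq, Finset.sum_ite_eq',
            Finset.mem_univ, if_true, ← hdR]
          ring
      _ ≤ cR * (dotProduct (star x) x).re := by
          refine mul_le_mul_of_nonneg_right ?_ hx0
          rw [hcR]
          nlinarith [hdR1]
  have H6 : ∀ z, (Cz z * xiz z).trace.re ≤ cR * traceNorm (xiz z) := by
    intro z
    obtain ⟨_, Pp, Pm, _, hPp, hPm, hdec, _, htr2⟩ := herm_package (hxizH z)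
    have h1 : (Cz z * xiz z).trace = (Cz z * Pp).trace - (Cz z * Pm).trace := by
      rw [hdec, Matrix.mul_sub, Matrix.trace_sub]
    have h2 := trace_mul_psd (Cz z) Pp hPp cR (H5 z)
    have h3 := trace_mul_psd (Cz z) Pm hPm cR (H5 z)
    have h4 : traceNorm (xiz z) = Pp.trace.re + Pm.trace.re := by
      have := congrArg Complex.re htr2
      simpa using this
    rw [h1, Complex.sub_re, h4, mul_add]
    have := abs_le.mp h2
    have := abs_le.mp h3
    linarith [(abs_le.mp h2).2, (abs_le.mp h3).1, (abs_le.mp h2).1, (abs_le.mp h3).2]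
  have H8 : traceNorm (measOut t P ξ) = ∑ z, traceNorm (xiz z) := by
    have hBDpsd : (Matrix.blockDiagonal fun z => absM (xiz z)).PosSemidef := by
      refine Matrix.PosSemidef.of_dotProduct_mulVec_nonneg ?_ ?_
      · show (Matrix.blockDiagonal fun z => absM (xiz z))ᴴ = _
        rw [Matrix.blockDiagonal_conjTranspose]
        exact congrArg Matrix.blockDiagonal (funext fun z =>
          (absM_posSemidef (xiz z)).1)
      · intro x
        have e : dotProduct (star x) ((Matrix.blockDiagonal fun z => absM (xiz z)) *ᵥ x)
            = ∑ z, dotProduct (star fun i => x (i, z))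
                ((absM (xiz z)) *ᵥ (fun i => x (i, z))) := by
          simp only [dotProduct, Matrix.mulVec, Pi.star_apply, Fintype.sum_prod_type,
            Matrix.blockDiagonal_apply, ite_mul, zero_mul, mul_ite, mul_zero,
            Finset.sum_ite_eq, Finset.sum_ite_eq', Finset.mem_univ, if_true]
          rw [Finset.sum_comm]
        rw [e]
        exact Finset.sum_nonneg fun z _ =>
          (absM_posSemidef (xiz z)).dotProduct_mulVec_nonneg _
    have hsq : (Matrix.blockDiagonal fun z => absM (xiz z)) ^ 2
        = (Matrix.blockDiagonal xiz) * (Matrix.blockDiagonal xiz)ᴴ := by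
      rw [← Matrix.blockDiagonal_pow, Matrix.blockDiagonal_conjTranspose,
        ← Matrix.blockDiagonal_mul]
      exact congrArg Matrix.blockDiagonal (funext fun z => by
        simp only [Pi.pow_apply]
        exact absM_sq (xiz z))
    have habs : absM (Matrix.blockDiagonal xiz) = Matrix.blockDiagonal fun z => absM (xiz z) :=
      (eq_absM_of_sq_eq hBDpsd hsq).symm
    rw [hmeas, traceNorm, habs, Matrix.trace_blockDiagonal, Complex.re_sum]
    rfl
  have H7 : traceNorm ξ ≤ cR * traceNorm (measOut t P ξ) := by
    have e1 : traceNorm ξ = ((W * ξ).trace).re := by rw [hWtr, Complex.ofReal_re]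
    rw [e1, H4, Complex.re_sum, H8, Finset.mul_sum]
    exact Finset.sum_le_sum fun z _ => H6 z
  rw [ge_iff_le, inv_mul_le_iff₀ (by positivity)]
  exact H7.trans (le_of_eq rfl)
end

section
/- Define ρ_{AB₁…B_nĀB̄₁…B̄_n} = (1/d²)·Σ_{i,j=1}^d |j⟩⟨j|_A ⊗ |i⟩⟨i|_Ā ⊗ (|i⟩⟨i|_B)^{⊗n} ⊗ (|i⟩⟨i|_{B̄})^{⊗n} on systems each of dimension d ≥ 2. Then ρ is invariant under permutations of the (B_kB̄_k) pairs and ρ_{AB₁} = 1_{AB₁}/d², yet for every finite mixture Σ_ℓ p_ℓ σ^ℓ_{AĀ} ⊗ ω^ℓ_{BB̄} with σ^ℓ_A = 1_A/d and ω^ℓ_B = 1_B/d, the trace distance ‖ρ_{AĀB₁B̄₁} − Σ_ℓ p_ℓ σ^ℓ_{AĀ} ⊗ ω^ℓ_{BB̄}‖₁ ≥ 2(1 − 1/d). -/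
open Matrix Kronecker
open scoped ComplexOrder

open Classical in
/-- The counterexample state
`ρ = (1/d²)·Σ_{i,j} |j⟩⟨j|_A ⊗ |i⟩⟨i|_Ā ⊗ (|i⟩⟨i|_B)^{⊗n} ⊗ (|i⟩⟨i|_{B̄})^{⊗n}`,
with A-system index `(j, i) : Fin d × Fin d` (A and Ā) and the pairs `(B_l, B̄_l)`. -/
noncomputable def cexState (d n : ℕ) :
    Matrix ((Fin d × Fin d) × (Fin n → Fin d × Fin d))
      ((Fin d × Fin d) × (Fin n → Fin d × Fin d)) ℂ :=
  Matrix.of fun p q =>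
    if p = q ∧ ∀ l, p.2 l = (p.1.2, p.1.2) then (((d : ℂ))^2)⁻¹ else 0

open Classical in
/-- The reduced state `ρ_{AB₁}` of the counterexample state. -/
noncomputable def cexAB1 (d n : ℕ) (h : 0 < n) : Matrix (Fin d × Fin d) (Fin d × Fin d) ℂ :=
  Matrix.of fun p q => ∑ k : Fin d, ∑ f : Fin n → Fin d × Fin d, ∑ g : Fin n → Fin d × Fin d,
    if (f ⟨0, h⟩).1 = p.2 ∧ (g ⟨0, h⟩).1 = q.2 ∧ (f ⟨0, h⟩).2 = (g ⟨0, h⟩).2 ∧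
        (∀ l, l ≠ ⟨0, h⟩ → f l = g l) then
      cexState d n ((p.1, k), f) ((q.1, k), g)
    else 0

open Classical in
/-- The reduced state `ρ_{AĀB₁B̄₁}` of the counterexample state. -/
noncomputable def cexAAbarBBbar (d n : ℕ) (h : 0 < n) :
    Matrix ((Fin d × Fin d) × (Fin d × Fin d)) ((Fin d × Fin d) × (Fin d × Fin d)) ℂ :=
  Matrix.of fun p q => ∑ f : Fin n → Fin d × Fin d, ∑ g : Fin n → Fin d × Fin d,
    if f ⟨0, h⟩ = p.2 ∧ g ⟨0, h⟩ = q.2 ∧ (∀ l, l ≠ ⟨0, h⟩ → f l = g l) then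
      cexState d n ((p.1.1, p.1.2), f) ((q.1.1, q.1.2), g)
    else 0

namespace CexHelper

variable {n : Type*} [Fintype n] [DecidableEq n]

lemma trace_nonneg_of_psd {A : Matrix n n ℂ} (hA : A.PosSemidef) : 0 ≤ A.trace := by
  have h : ∀ i, 0 ≤ A i i := by
    intro i
    exact hA.diag_nonneg
  exact Finset.sum_nonneg fun i _ => h i

open scoped MatrixOrder in
lemma trace_mul_nonneg_of_psd {A B : Matrix n n ℂ} (hA : A.PosSemidef) (hB : B.PosSemidef) :
    0 ≤ (A * B).trace := by
  obtain ⟨C, rfl⟩ := CStarAlgebra.nonneg_iff_eq_star_mul_self.mp hA.nonneg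
  rw [Matrix.mul_assoc, Matrix.trace_mul_comm]
  exact trace_nonneg_of_psd (hB.mul_mul_conjTranspose_same C)

lemma unitary_conj_diag_mul (U : Matrix n n ℂ) (hUU : (star U) * U = 1) (a b : n → ℂ) :
    (U * Matrix.diagonal a * star U) * (U * Matrix.diagonal b * star U)
      = U * Matrix.diagonal (fun i => a i * b i) * star U := by
  calc (U * Matrix.diagonal a * star U) * (U * Matrix.diagonal b * star U)
      = U * (Matrix.diagonal a * ((star U * U) * Matrix.diagonal b)) * star U := by
        simp only [Matrix.mul_assoc]
    _ = U * Matrix.diagonal (fun i => a i * b i) * star U := by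
        rw [hUU, Matrix.one_mul, Matrix.diagonal_mul_diagonal]

open scoped MatrixOrder in
lemma absM_eq_sqrt (M : Matrix n n ℂ) : absM M = CFC.sqrt (M * Mᴴ) := by
  have hA := Matrix.posSemidef_self_mul_conjTranspose M
  rw [CFC.sqrt_eq_cfc, cfc_nnreal_eq_real _ (M * Mᴴ) hA.nonneg, hA.1.cfc_eq]
  simp only [IsHermitian.cfc, Unitary.conjStarAlgAut_apply, absM]
  congr
  funext i
  simp
  rcases le_total 0 i with h | h
  · rw [max_eq_left h]
  · rw [max_eq_right h, Real.sqrt_eq_zero_of_nonpos h, Real.sqrt_zero]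

open scoped MatrixOrder in
lemma key (M P : Matrix n n ℂ) (hM : M.IsHermitian) (htr : M.trace = 0)
    (hP : P.PosSemidef) (hP1 : (1 - P).PosSemidef) :
    2 * (P * M).trace.re ≤ traceNorm M := by
  set U : Matrix n n ℂ := (hM.eigenvectorUnitary : Matrix n n ℂ) with hU
  set lam := hM.eigenvalues with hlam
  have hUU : (star U) * U = 1 := Matrix.mem_unitaryGroup_iff'.mp hM.eigenvectorUnitary.2
  set Pos : Matrix n n ℂ := U * Matrix.diagonal (fun i => ((max (lam i) 0 : ℝ) : ℂ)) * star U
    with hPosDef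
  set Neg : Matrix n n ℂ := U * Matrix.diagonal (fun i => ((max (-lam i) 0 : ℝ) : ℂ)) * star U
    with hNegDef
  have hPos : Pos.PosSemidef := by
    rw [hPosDef, Matrix.star_eq_conjTranspose]
    exact (Matrix.PosSemidef.diagonal (fun i => by positivity)).mul_mul_conjTranspose_same U
  have hNeg : Neg.PosSemidef := by
    rw [hNegDef, Matrix.star_eq_conjTranspose]
    exact (Matrix.PosSemidef.diagonal (fun i => by positivity)).mul_mul_conjTranspose_same U
  have hspec : M = U * Matrix.diagonal (fun i => ((lam i : ℝ) : ℂ)) * star U := by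
    conv_lhs => rw [hM.spectral_theorem]
    rfl
  have hsub : Pos - Neg = M := by
    rw [hPosDef, hNegDef, ← Matrix.sub_mul, ← Matrix.mul_sub, Matrix.diagonal_sub]
    simp only [← Complex.ofReal_sub, max_zero_sub_max_neg_zero_eq_self]
    exact hspec.symm
  have hsum : Pos + Neg = U * Matrix.diagonal (fun i => ((|lam i| : ℝ) : ℂ)) * star U := by
    rw [hPosDef, hNegDef, ← Matrix.add_mul, ← Matrix.mul_add, Matrix.diagonal_add]
    simp only [← Complex.ofReal_add, max_zero_add_max_neg_zero_eq_abs_self]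
  have habs : absM M = Pos + Neg := by
    have hPN : (Pos + Neg).PosSemidef := hPos.add hNeg
    rw [absM_eq_sqrt, CFC.sqrt_eq_iff _ _ (Matrix.posSemidef_self_mul_conjTranspose M).nonneg
      hPN.nonneg, ← pow_two]
    have hMM : M * Mᴴ = M * M := by rw [hM.eq]
    rw [pow_two, hsum, hMM, unitary_conj_diag_mul U hUU]
    conv_rhs => rw [hspec]
    rw [unitary_conj_diag_mul U hUU]
    have hfn : (fun i => ((|lam i| : ℝ) : ℂ) * ((|lam i| : ℝ) : ℂ))
        = (fun i => ((lam i : ℝ) : ℂ) * ((lam i : ℝ) : ℂ)) := by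
      funext i
      rw [← Complex.ofReal_mul, ← Complex.ofReal_mul, abs_mul_abs_self]
    rw [hfn]
  have htrPN : Pos.trace.re = Neg.trace.re := by
    have h0 : Pos.trace - Neg.trace = 0 := by rw [← Matrix.trace_sub, hsub, htr]
    have := congrArg Complex.re h0
    simpa [Complex.sub_re, sub_eq_zero] using this
  have hPM : (P * M).trace.re = (P * Pos).trace.re - (P * Neg).trace.re := by
    have : P * M = P * Pos - P * Neg := by rw [← Matrix.mul_sub, hsub]
    rw [this, Matrix.trace_sub, Complex.sub_re]
  have hPNeg : 0 ≤ (P * Neg).trace.re := (Complex.le_def.mp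
    (trace_mul_nonneg_of_psd hP hNeg)).1
  have hPPos : (P * Pos).trace.re ≤ Pos.trace.re := by
    have h0 : 0 ≤ ((1 - P) * Pos).trace.re := (Complex.le_def.mp
      (trace_mul_nonneg_of_psd hP1 hPos)).1
    have : ((1 - P) * Pos).trace = Pos.trace - (P * Pos).trace := by
      rw [Matrix.sub_mul, Matrix.one_mul, Matrix.trace_sub]
    rw [this, Complex.sub_re] at h0
    linarith
  have htn : traceNorm M = Pos.trace.re + Neg.trace.re := by
    rw [traceNorm, habs, Matrix.trace_add, Complex.add_re]
  rw [htn, hPM]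
  linarith

lemma cexAAbarBBbar_eq (d n : ℕ) (hn : 0 < n) :
    cexAAbarBBbar d n hn = Matrix.diagonal (fun p : (Fin d × Fin d) × (Fin d × Fin d) =>
      if p.2 = (p.1.2, p.1.2) then (((d : ℂ))^2)⁻¹ else 0) := by
  classical
  ext p q
  rw [cexAAbarBBbar]
  simp only [Matrix.of_apply]
  set c0 : Fin n → Fin d × Fin d := fun _ => (p.1.2, p.1.2) with hc0
  have hterm : ∀ f g : Fin n → Fin d × Fin d,
      (if f ⟨0, hn⟩ = p.2 ∧ g ⟨0, hn⟩ = q.2 ∧ (∀ l, l ≠ ⟨0, hn⟩ → f l = g l) then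
        cexState d n ((p.1.1, p.1.2), f) ((q.1.1, q.1.2), g) else 0)
      = if f = c0 then (if g = c0 then
          (if p = q ∧ p.2 = (p.1.2, p.1.2) then (((d : ℂ))^2)⁻¹ else 0) else 0) else 0 := by
    intro f g
    rw [cexState]
    simp only [Matrix.of_apply, ← ite_and]
    refine if_congr ?_ rfl rfl
    constructor
    · rintro ⟨⟨hf0, hg0, hfg⟩, heq, hconst⟩
      obtain ⟨h1, h2⟩ := Prod.mk.injEq _ _ _ _ ▸ heq
      have hfc : f = c0 := funext fun l => hconst l
      have hp2 : p.2 = (p.1.2, p.1.2) := by rw [← hf0, hfc]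
      have hgc : g = c0 := h2 ▸ hfc
      have hq2 : q.2 = p.2 := by rw [← hg0, hgc, hp2]
      have hp1 : p.1 = q.1 := by
        have := congrArg Prod.fst heq
        simpa using this
      exact ⟨hfc, hgc, Prod.ext hp1 hq2.symm, hp2⟩
    · rintro ⟨hfc, hgc, hpq, hp2⟩
      subst hfc; subst hgc
      refine ⟨⟨hp2.symm, ?_, fun l _ => rfl⟩, ?_, fun l => rfl⟩
      · rw [← hpq]; exact hp2.symm
      · rw [← hpq]
  calc (∑ f : Fin n → Fin d × Fin d, ∑ g : Fin n → Fin d × Fin d,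
        if f ⟨0, hn⟩ = p.2 ∧ g ⟨0, hn⟩ = q.2 ∧ (∀ l, l ≠ ⟨0, hn⟩ → f l = g l) then
          cexState d n ((p.1.1, p.1.2), f) ((q.1.1, q.1.2), g) else 0)
      = ∑ f : Fin n → Fin d × Fin d, ∑ g : Fin n → Fin d × Fin d,
          (if f = c0 then (if g = c0 then
            (if p = q ∧ p.2 = (p.1.2, p.1.2) then (((d : ℂ))^2)⁻¹ else 0) else 0) else 0) :=
        Finset.sum_congr rfl fun f _ => Finset.sum_congr rfl fun g _ => hterm f g
    _ = (if p = q ∧ p.2 = (p.1.2, p.1.2) then (((d : ℂ))^2)⁻¹ else 0) := by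
        simp [Finset.sum_ite_eq']
    _ = Matrix.diagonal (fun p : (Fin d × Fin d) × (Fin d × Fin d) =>
          if p.2 = (p.1.2, p.1.2) then (((d : ℂ))^2)⁻¹ else 0) p q := by
        rw [Matrix.diagonal_apply]
        by_cases h : p = q
        · subst h; simp
        · simp [h]

lemma perm_inv (d n : ℕ) (π : Equiv.Perm (Fin n)) (i : Fin d × Fin d)
    (f : Fin n → Fin d × Fin d) (j : Fin d × Fin d) (g : Fin n → Fin d × Fin d) :
    cexState d n (i, f ∘ π) (j, g ∘ π) = cexState d n (i, f) (j, g) := by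
  rw [cexState]
  simp only [Matrix.of_apply]
  refine if_congr ?_ rfl rfl
  have hcomp : f ∘ π = g ∘ π ↔ f = g := by
    constructor
    · intro h
      funext l
      have := congrFun h (π.symm l)
      simpa using this
    · rintro rfl; rfl
  have hall : (∀ l, (f ∘ π) l = (i.2, i.2)) ↔ ∀ l, f l = (i.2, i.2) := by
    constructor
    · intro h l
      have := h (π.symm l)
      simpa using this
    · intro h l; exact h (π l)
  simp only [Prod.mk.injEq]
  rw [hcomp]
  constructor
  · rintro ⟨⟨h1, h2⟩, h3⟩; exact ⟨⟨h1, h2⟩, hall.mp h3⟩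
  · rintro ⟨⟨h1, h2⟩, h3⟩; exact ⟨⟨h1, h2⟩, hall.mpr h3⟩

lemma cexAB1_eq (d n : ℕ) (hn : 0 < n) :
    cexAB1 d n hn = (((d : ℂ))^2)⁻¹ • (1 : Matrix (Fin d × Fin d) (Fin d × Fin d) ℂ) := by
  classical
  ext p q
  rw [cexAB1]
  simp only [Matrix.of_apply]
  have hterm : ∀ (k : Fin d) (f g : Fin n → Fin d × Fin d),
      (if (f ⟨0, hn⟩).1 = p.2 ∧ (g ⟨0, hn⟩).1 = q.2 ∧ (f ⟨0, hn⟩).2 = (g ⟨0, hn⟩).2 ∧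
          (∀ l, l ≠ ⟨0, hn⟩ → f l = g l) then
        cexState d n ((p.1, k), f) ((q.1, k), g) else 0)
      = if f = (fun _ => (k, k)) then (if g = (fun _ => (k, k)) then
          (if k = p.2 then (if p = q then (((d : ℂ))^2)⁻¹ else 0) else 0) else 0) else 0 := by
    intro k f g
    rw [cexState]
    simp only [Matrix.of_apply, ← ite_and]
    refine if_congr ?_ rfl rfl
    constructor
    · rintro ⟨⟨hf1, hg1, _, _⟩, heq, hconst⟩
      have hfg : f = g := congrArg Prod.snd heq
      have hfc : f = (fun _ => (k, k)) := funext fun l => hconst l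
      have hp1 : p.1 = q.1 := by
        have := congrArg (Prod.fst ∘ Prod.fst) heq
        simpa using this
      have hkp : k = p.2 := by rw [← hf1, hfc]
      have hkq : k = q.2 := by rw [← hg1, ← hfg, hfc]
      exact ⟨hfc, hfg ▸ hfc, hkp, Prod.ext hp1 (hkp ▸ hkq ▸ rfl)⟩
    · rintro ⟨hfc, hgc, hkp, hpq⟩
      subst hfc; subst hgc
      refine ⟨⟨hkp, ?_, rfl, fun l _ => rfl⟩, ?_, fun l => rfl⟩
      · rw [← hpq]; exact hkp
      · rw [← hpq]
  calc (∑ k : Fin d, ∑ f : Fin n → Fin d × Fin d, ∑ g : Fin n → Fin d × Fin d,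
        if (f ⟨0, hn⟩).1 = p.2 ∧ (g ⟨0, hn⟩).1 = q.2 ∧ (f ⟨0, hn⟩).2 = (g ⟨0, hn⟩).2 ∧
            (∀ l, l ≠ ⟨0, hn⟩ → f l = g l) then
          cexState d n ((p.1, k), f) ((q.1, k), g) else 0)
      = ∑ k : Fin d, ∑ f : Fin n → Fin d × Fin d, ∑ g : Fin n → Fin d × Fin d,
          (if f = (fun _ => (k, k)) then (if g = (fun _ => (k, k)) then
            (if k = p.2 then (if p = q then (((d : ℂ))^2)⁻¹ else 0) else 0) else 0) else 0) :=
        Finset.sum_congr rfl fun k _ => Finset.sum_congr rfl fun f _ =>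
          Finset.sum_congr rfl fun g _ => hterm k f g
    _ = (if p = q then (((d : ℂ))^2)⁻¹ else 0) := by
        simp [Finset.sum_ite_eq', Finset.sum_ite_eq]
    _ = ((((d : ℂ))^2)⁻¹ • (1 : Matrix (Fin d × Fin d) (Fin d × Fin d) ℂ)) p q := by
        simp only [Matrix.smul_apply, Matrix.one_apply, smul_eq_mul, mul_ite, mul_one, mul_zero]

end CexHelper

/-- The counterexample: the state ρ is invariant under permutations of the (B_lB̄_l) pairs
and has `ρ_{AB₁} = 1/d²`, yet its `AĀB₁B̄₁` marginal is at trace distance at least `2(1−1/d)`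
from every mixture `Σ_ℓ p_ℓ σ^ℓ_{AĀ} ⊗ ω^ℓ_{BB̄}` with `σ^ℓ_A = 1_A/d` and `ω^ℓ_B = 1_B/d`. -/
theorem channel_deFinetti_constraints_necessary (d n : ℕ) (hd : 2 ≤ d) (hn : 0 < n) :
    (∀ π : Equiv.Perm (Fin n), ∀ (i : Fin d × Fin d) (f : Fin n → Fin d × Fin d)
      (j : Fin d × Fin d) (g : Fin n → Fin d × Fin d),
        cexState d n (i, f ∘ π) (j, g ∘ π) = cexState d n (i, f) (j, g)) ∧
    cexAB1 d n hn = (((d : ℂ))^2)⁻¹ • (1 : Matrix (Fin d × Fin d) (Fin d × Fin d) ℂ) ∧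
    ∀ (N : ℕ) (p : Fin N → ℝ)
      (σ : Fin N → Matrix (Fin d × Fin d) (Fin d × Fin d) ℂ)
      (ω : Fin N → Matrix (Fin d × Fin d) (Fin d × Fin d) ℂ),
      (∀ l, 0 ≤ p l) → (∑ l, p l = 1) →
      (∀ l, (σ l).PosSemidef ∧ ptraceB (σ l) = ((d : ℂ))⁻¹ • (1 : Matrix (Fin d) (Fin d) ℂ)) →
      (∀ l, (ω l).PosSemidef ∧ ptraceB (ω l) = ((d : ℂ))⁻¹ • (1 : Matrix (Fin d) (Fin d) ℂ)) →
      traceNorm (cexAAbarBBbar d n hn - ∑ l, (p l : ℂ) • ((σ l) ⊗ₖ (ω l))) ≥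
        2 * (1 - 1 / (d : ℝ)) := by
  classical
  have hd0 : (d : ℂ) ≠ 0 := Nat.cast_ne_zero.mpr (by omega)
  have hdR0 : (d : ℝ) ≠ 0 := Nat.cast_ne_zero.mpr (by omega)
  refine ⟨fun π i f j g => CexHelper.perm_inv d n π i f j g, CexHelper.cexAB1_eq d n hn, ?_⟩
  intro N p σ ω hp hpsum hσ hω
  set v : ℂ := (((d : ℂ))^2)⁻¹ with hv
  set Pi2 : Matrix ((Fin d × Fin d) × (Fin d × Fin d)) ((Fin d × Fin d) × (Fin d × Fin d)) ℂ :=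
    Matrix.diagonal (fun p => if p.1.2 = p.2.1 then 1 else 0) with hPi2
  have hPiPSD : Pi2.PosSemidef := by
    refine Matrix.PosSemidef.diagonal fun x => ?_
    dsimp only
    split
    · exact zero_le_one
    · exact le_refl 0
  have h1Pi : ((1 : Matrix ((Fin d × Fin d) × (Fin d × Fin d))
      ((Fin d × Fin d) × (Fin d × Fin d)) ℂ) - Pi2).PosSemidef := by
    have heq : (1 : Matrix ((Fin d × Fin d) × (Fin d × Fin d))
        ((Fin d × Fin d) × (Fin d × Fin d)) ℂ) - Pi2
        = Matrix.diagonal (fun x => 1 - (if x.1.2 = x.2.1 then (1:ℂ) else 0)) := by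
      rw [hPi2, ← Matrix.diagonal_one]
      ext a b
      by_cases h : a = b
      · subst h; simp [Matrix.diagonal_apply]
      · simp [Matrix.diagonal_apply, h]
    rw [heq]
    refine Matrix.PosSemidef.diagonal fun x => ?_
    dsimp only
    split
    · simp
    · simp
  set R : Matrix ((Fin d × Fin d) × (Fin d × Fin d)) ((Fin d × Fin d) × (Fin d × Fin d)) ℂ :=
    Matrix.diagonal (fun p => if p.2 = (p.1.2, p.1.2) then v else 0) with hRdef
  have hR : cexAAbarBBbar d n hn = R := CexHelper.cexAAbarBBbar_eq d n hn
  -- traces of σ and ω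
  have hωsum : ∀ l (i : Fin d), (∑ b : Fin d, ω l (i, b) (i, b)) = (d : ℂ)⁻¹ := by
    intro l i
    have := congrFun (congrFun (congrArg (fun A => (A : Matrix (Fin d) (Fin d) ℂ)) (hω l).2) i) i
    simpa [ptraceB, Matrix.smul_apply, Matrix.one_apply] using this
  have hσsum : ∀ l (j : Fin d), (∑ i : Fin d, σ l (j, i) (j, i)) = (d : ℂ)⁻¹ := by
    intro l j
    have := congrFun (congrFun (congrArg (fun A => (A : Matrix (Fin d) (Fin d) ℂ)) (hσ l).2) j) j
    simpa [ptraceB, Matrix.smul_apply, Matrix.one_apply] using this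
  have htrσ : ∀ l, (σ l).trace = 1 := by
    intro l
    rw [Matrix.trace]
    rw [Fintype.sum_prod_type]
    simp [hσsum l, Finset.sum_const, hd0]
  have htrω : ∀ l, (ω l).trace = 1 := by
    intro l
    rw [Matrix.trace]
    rw [Fintype.sum_prod_type]
    simp [hωsum l, Finset.sum_const, hd0]
  -- trace of R and Pi2 * R
  have htrR : R.trace = 1 := by
    rw [hRdef, Matrix.trace_diagonal]
    rw [Fintype.sum_prod_type]
    simp [Finset.sum_ite_eq', hv]
    field_simp
  have htrPiR : (Pi2 * R).trace = 1 := by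
    rw [hPi2, hRdef, Matrix.diagonal_mul_diagonal, Matrix.trace_diagonal]
    have hterm : ∀ x : (Fin d × Fin d) × (Fin d × Fin d),
        ((if x.1.2 = x.2.1 then (1:ℂ) else 0) * (if x.2 = (x.1.2, x.1.2) then v else 0))
        = if x.2 = (x.1.2, x.1.2) then v else 0 := by
      intro x
      by_cases h : x.2 = (x.1.2, x.1.2)
      · have h2 : x.1.2 = x.2.1 := by rw [h]
        rw [if_pos h, if_pos h2, one_mul]
      · simp [h]
    rw [Finset.sum_congr rfl fun x _ => hterm x]
    rw [Fintype.sum_prod_type]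
    simp [Finset.sum_ite_eq', hv]
    field_simp
  -- trace of Pi2 * (σ ⊗ ω)
  have htrPiK : ∀ l, (Pi2 * ((σ l) ⊗ₖ (ω l))).trace = (d : ℂ)⁻¹ := by
    intro l
    rw [Matrix.trace]
    have hdiag : ∀ x : (Fin d × Fin d) × (Fin d × Fin d),
        (Pi2 * ((σ l) ⊗ₖ (ω l))).diag x
        = (if x.1.2 = x.2.1 then (1:ℂ) else 0) * (σ l x.1 x.1 * ω l x.2 x.2) := by
      intro x
      rw [Matrix.diag_apply, hPi2, Matrix.diagonal_mul]
      rfl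
    rw [Finset.sum_congr rfl fun x _ => hdiag x]
    rw [Fintype.sum_prod_type]
    have hinner : ∀ x : Fin d × Fin d,
        (∑ y : Fin d × Fin d, (if x.2 = y.1 then (1:ℂ) else 0) * (σ l x x * ω l y y))
        = σ l x x * (d : ℂ)⁻¹ := by
      intro x
      rw [Fintype.sum_prod_type]
      have : ∀ y1 : Fin d, (∑ y2 : Fin d,
          (if x.2 = y1 then (1:ℂ) else 0) * (σ l x x * ω l (y1, y2) (y1, y2)))
          = if y1 = x.2 then (∑ y2 : Fin d, σ l x x * ω l (y1, y2) (y1, y2)) else 0 := by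
        intro y1
        by_cases h : y1 = x.2
        · simp [h]
        · have : ¬ (x.2 = y1) := fun hh => h hh.symm
          simp [this, h]
      rw [Finset.sum_congr rfl fun y1 _ => this y1, Finset.sum_ite_eq' Finset.univ x.2]
      simp [← Finset.mul_sum, hωsum l x.2]
    rw [Finset.sum_congr rfl fun x _ => hinner x, ← Finset.sum_mul]
    have : (∑ x : Fin d × Fin d, σ l x x) = 1 := htrσ l
    rw [this, one_mul]
  -- Hermiticity
  have hKH : ∀ l, ((σ l) ⊗ₖ (ω l)).IsHermitian := by
    intro l
    ext x y
    rw [Matrix.conjTranspose_apply]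
    show star (σ l y.1 x.1 * ω l y.2 x.2) = σ l x.1 y.1 * ω l x.2 y.2
    rw [star_mul', (hσ l).1.1.apply, (hω l).1.1.apply]
  set τ : Matrix ((Fin d × Fin d) × (Fin d × Fin d)) ((Fin d × Fin d) × (Fin d × Fin d)) ℂ :=
    ∑ l, (p l : ℂ) • ((σ l) ⊗ₖ (ω l)) with hτ
  have hτH : τ.IsHermitian := by
    rw [Matrix.IsHermitian, hτ, Matrix.conjTranspose_sum]
    refine Finset.sum_congr rfl fun l _ => ?_
    rw [Matrix.conjTranspose_smul, (hKH l).eq]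
    congr 1
    simp [Complex.star_def, Complex.conj_ofReal]
  have hRH : R.IsHermitian := by
    rw [hRdef]
    refine Matrix.isHermitian_diagonal_of_self_adjoint _ ?_
    funext x
    dsimp only [Pi.star_apply]
    split
    · rw [hv]
      simp [Complex.star_def, map_inv₀, ← Complex.ofReal_pow]
    · simp
  set M : Matrix ((Fin d × Fin d) × (Fin d × Fin d)) ((Fin d × Fin d) × (Fin d × Fin d)) ℂ :=
    cexAAbarBBbar d n hn - τ with hMdef
  have hMH : M.IsHermitian := by
    rw [hMdef, hR]
    exact hRH.sub hτH
  have hpsumC : (∑ l, (p l : ℂ)) = 1 := by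
    rw [← Complex.ofReal_sum, hpsum, Complex.ofReal_one]
  have htrτ : τ.trace = 1 := by
    rw [hτ, Matrix.trace_sum]
    have : ∀ l, ((p l : ℂ) • ((σ l) ⊗ₖ (ω l))).trace = (p l : ℂ) := by
      intro l
      rw [Matrix.trace_smul, Matrix.trace_kronecker, htrσ l, htrω l, one_mul, smul_eq_mul,
        mul_one]
    rw [Finset.sum_congr rfl fun l _ => this l, hpsumC]
  have htrM : M.trace = 0 := by
    rw [hMdef, Matrix.trace_sub, hR, htrR, htrτ, sub_self]
  have htrPiM : (Pi2 * M).trace = 1 - (d : ℂ)⁻¹ := by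
    rw [hMdef, Matrix.mul_sub, Matrix.trace_sub, hR, htrPiR, hτ, Matrix.mul_sum,
      Matrix.trace_sum]
    have : ∀ l, (Pi2 * ((p l : ℂ) • ((σ l) ⊗ₖ (ω l)))).trace = (p l : ℂ) * (d : ℂ)⁻¹ := by
      intro l
      rw [Matrix.mul_smul, Matrix.trace_smul, htrPiK l, smul_eq_mul]
    rw [Finset.sum_congr rfl fun l _ => this l, ← Finset.sum_mul, hpsumC, one_mul]
  have hre : (Pi2 * M).trace.re = 1 - 1 / (d : ℝ) := by
    rw [htrPiM]
    rw [show ((d : ℂ))⁻¹ = (((d : ℝ)⁻¹ : ℝ) : ℂ) by push_cast; ring]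
    rw [Complex.sub_re, Complex.one_re, Complex.ofReal_re, one_div]
  have hkey := CexHelper.key M Pi2 hMH htrM hPiPSD h1Pi
  rw [hre] at hkey
  rw [ge_iff_le]
  exact hkey
end

section
/- The first level of the SDP hierarchy for the channel fidelity is bounded by the maximum of 1 and (d_Ā/M)²: for any feasible W_{AĀBB̄} ⪰ 0 with Tr W = 1, W_{ABB̄} = (1_A/d_A) ⊗ W_{BB̄}, and W_{AĀB} = W_{AĀ} ⊗ (1_B/d_B), the objective d_Ā d_B·Tr[(J^N_{ĀB} ⊗ Φ_{AB̄})·W_{AĀBB̄}] is at most min{1, (d_Ā/M)²}, where M = d_A = d_{B̄}. -/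
open Matrix Kronecker
open scoped ComplexOrder

/-- Partial trace over the first tensor factor. -/
noncomputable def ptraceA {A B : Type*} [Fintype A] [Fintype B]
    (M : Matrix (A × B) (A × B) ℂ) : Matrix B B ℂ :=
  Matrix.of fun i j => ∑ k : A, M (k, i) (k, j)

open Classical in
/-- Positive semidefinite square root (junk value `0` on non-PSD input). -/
noncomputable def matSqrt {n : Type*} [Fintype n] [DecidableEq n] (A : Matrix n n ℂ) :
    Matrix n n ℂ :=
  if h : A.PosSemidef then
    h.1.eigenvectorUnitary.1 * diagonal ((↑) ∘ (√·) ∘ h.1.eigenvalues) *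
      (star h.1.eigenvectorUnitary : Matrix n n ℂ) else 0

/-- The fidelity `F(ρ,σ) = ‖√ρ √σ‖₁²`. -/
noncomputable def fidelity {n : Type*} [Fintype n] [DecidableEq n] (ρ σ : Matrix n n ℂ) : ℝ :=
  (traceNorm (matSqrt ρ * matSqrt σ))^2

open Classical in
/-- The normalized maximally entangled state `Φ = (1/M)Σ_{i,j}|ii⟩⟨jj|` on `X ⊗ X`. -/
noncomputable def maxEnt (X : Type*) [Fintype X] : Matrix (X × X) (X × X) ℂ :=
  Matrix.of fun p q => if p.1 = p.2 ∧ q.1 = q.2 then ((Fintype.card X : ℂ))⁻¹ else 0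

/-- The normalized Choi state `J^N_{ĀB} = (N ⊗ I)(Φ_{ĀĀ})` of the channel with Kraus
operators `Nk`, with index order `(B, Ā)`. -/
noncomputable def choiState {a b : Type*} [Fintype a] [Fintype b] {tN : ℕ}
    (Nk : Fin tN → Matrix b a ℂ) : Matrix (b × a) (b × a) ℂ :=
  Matrix.of fun p q =>
    ((Fintype.card a : ℂ))⁻¹ * ∑ j, (Nk j) p.1 p.2 * star ((Nk j) q.1 q.2)

/-- The operator `J^N_{ĀB} ⊗ Φ_{AB̄}` arranged on the index ordering `(A × Ā) × (B × B̄)`. -/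
noncomputable def qecOp {a b : Type*} [Fintype a] [Fintype b] (M : ℕ) {tN : ℕ}
    (Nk : Fin tN → Matrix b a ℂ) :
    Matrix ((Fin M × a) × (b × Fin M)) ((Fin M × a) × (b × Fin M)) ℂ :=
  Matrix.of fun r c =>
    choiState Nk (r.2.1, r.1.2) (c.2.1, c.1.2) * maxEnt (Fin M) (r.1.1, r.2.2) (c.1.1, c.2.2)

/-- The bilinear-program channel fidelity
`F(N,M) = max d_Ā d_B Tr[(J^N ⊗ Φ)(E ⊗ D)]` over PSD `E_{AĀ}`, `D_{BB̄}` with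
`E_A = 1_A/M` and `D_B = 1_B/d_B`. -/
noncomputable def Fbil {a b : Type*} [Fintype a] [DecidableEq a] [Fintype b] [DecidableEq b]
    (M : ℕ) {tN : ℕ} (Nk : Fin tN → Matrix b a ℂ) : ℝ :=
  sSup { r : ℝ | ∃ (E : Matrix (Fin M × a) (Fin M × a) ℂ) (D : Matrix (b × Fin M) (b × Fin M) ℂ),
    E.PosSemidef ∧ D.PosSemidef ∧
    ptraceB E = ((M : ℂ))⁻¹ • (1 : Matrix (Fin M) (Fin M) ℂ) ∧
    ptraceB D = ((Fintype.card b : ℂ))⁻¹ • (1 : Matrix b b ℂ) ∧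
    r = (Fintype.card a : ℝ) * (Fintype.card b : ℝ) * ((qecOp M Nk * (E ⊗ₖ D)).trace).re }

/-- The LOCC(1)-assisted bilinear-program channel fidelity: as `Fbil` but over finite families
`E^i, D^i` with `Σ_i E^i_A = 1_A/M` and `D^i_B = 1_B/d_B` for each `i`. -/
noncomputable def FbilLOCC {a b : Type*} [Fintype a] [DecidableEq a] [Fintype b] [DecidableEq b]
    (M : ℕ) {tN : ℕ} (Nk : Fin tN → Matrix b a ℂ) : ℝ :=
  sSup { r : ℝ | ∃ (N' : ℕ) (E : Fin N' → Matrix (Fin M × a) (Fin M × a) ℂ)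
    (D : Fin N' → Matrix (b × Fin M) (b × Fin M) ℂ),
    (∀ i, (E i).PosSemidef) ∧ (∀ i, (D i).PosSemidef) ∧
    ptraceB (∑ i, E i) = ((M : ℂ))⁻¹ • (1 : Matrix (Fin M) (Fin M) ℂ) ∧
    (∀ i, ptraceB (D i) = ((Fintype.card b : ℂ))⁻¹ • (1 : Matrix b b ℂ)) ∧
    r = (Fintype.card a : ℝ) * (Fintype.card b : ℝ) *
      ((qecOp M Nk * (∑ i, (E i) ⊗ₖ (D i))).trace).re }

/-- The output state `((D∘N∘E) ⊗ I_R)(Φ_{AR})` of a coding scheme given by Kraus operators. -/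
noncomputable def codeOut {a b : Type*} [Fintype a] [Fintype b] (M : ℕ) {tN tE tD : ℕ}
    (Nk : Fin tN → Matrix b a ℂ) (Ek : Fin tE → Matrix a (Fin M) ℂ)
    (Dk : Fin tD → Matrix (Fin M) b ℂ) :
    Matrix (Fin M × Fin M) (Fin M × Fin M) ℂ :=
  ∑ i, ∑ j, ∑ k,
    (((Dk i) * (Nk j) * (Ek k)) ⊗ₖ (1 : Matrix (Fin M) (Fin M) ℂ)) * maxEnt (Fin M) *
      (((Dk i) * (Nk j) * (Ek k)) ⊗ₖ (1 : Matrix (Fin M) (Fin M) ℂ))ᴴ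

/-- The operational channel fidelity `F(N,M)`: the best fidelity
`F(Φ_{B̄R}, ((D∘N∘E)⊗I_R)(Φ_{AR}))` over encoding channels `E` and decoding channels `D`. -/
noncomputable def Fop {a b : Type*} [Fintype a] [DecidableEq a] [Fintype b] [DecidableEq b]
    (M : ℕ) {tN : ℕ} (Nk : Fin tN → Matrix b a ℂ) : ℝ :=
  sSup { r : ℝ | ∃ (tE : ℕ) (Ek : Fin tE → Matrix a (Fin M) ℂ)
    (tD : ℕ) (Dk : Fin tD → Matrix (Fin M) b ℂ),
    (∑ k, (Ek k)ᴴ * Ek k = 1) ∧ (∑ i, (Dk i)ᴴ * Dk i = 1) ∧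
    r = fidelity (maxEnt (Fin M)) (codeOut M Nk Ek Dk) }

/-- The operational LOCC(1)-assisted channel fidelity: the encoder is an instrument
`{E^s}` (completely positive maps summing to a channel), each branch decoded by its own
channel `D^s`. -/
noncomputable def FopLOCC {a b : Type*} [Fintype a] [DecidableEq a] [Fintype b] [DecidableEq b]
    (M : ℕ) {tN : ℕ} (Nk : Fin tN → Matrix b a ℂ) : ℝ :=
  sSup { r : ℝ | ∃ (S tE tD : ℕ) (Ek : Fin S → Fin tE → Matrix a (Fin M) ℂ)
    (Dk : Fin S → Fin tD → Matrix (Fin M) b ℂ),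
    (∑ s, ∑ k, (Ek s k)ᴴ * Ek s k = 1) ∧ (∀ s, ∑ i, (Dk s i)ᴴ * Dk s i = 1) ∧
    r = fidelity (maxEnt (Fin M)) (∑ s, codeOut M Nk (Ek s) (Dk s)) }

/-- The marginal of `W` on `A ⊗ B ⊗ B̄` (tracing out `Ā`). -/
noncomputable def margAbar {A abar B : Type*} [Fintype abar]
    (W : Matrix ((A × abar) × B) ((A × abar) × B) ℂ) : Matrix (A × B) (A × B) ℂ :=
  Matrix.of fun p q => ∑ x : abar, W ((p.1, x), p.2) ((q.1, x), q.2)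

/-- The marginal of `W` on `A ⊗ Ā ⊗ B` (tracing out `B̄`). -/
noncomputable def margBbar {A B bbar : Type*} [Fintype bbar]
    (W : Matrix (A × (B × bbar)) (A × (B × bbar)) ℂ) : Matrix (A × B) (A × B) ℂ :=
  Matrix.of fun p q => ∑ v : bbar, W (p.1, (p.2, v)) (q.1, (q.2, v))

set_option maxHeartbeats 1000000
open Finset
open scoped ComplexConjugate

-- scalar Cauchy-Schwarz
lemma cs_trace {κ : Type*} [Fintype κ] (c : κ → κ → ℂ) :
    Complex.normSq (∑ m, c m m) ≤ (Fintype.card κ) * ∑ m, ∑ m', Complex.normSq (c m m') := by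
  calc Complex.normSq (∑ m, c m m) = ‖∑ m, c m m‖ ^ 2 := by
        rw [Complex.normSq_eq_norm_sq]
    _ ≤ (∑ m, ‖c m m‖) ^ 2 := by
        have := norm_sum_le (Finset.univ (α := κ)) (fun m => c m m)
        exact pow_le_pow_left₀ (norm_nonneg _) this 2
    _ ≤ (Fintype.card κ) * ∑ m, ‖c m m‖ ^ 2 := by
        simpa using sq_sum_le_card_mul_sum_sq (s := Finset.univ) (f := fun m => ‖c m m‖)
    _ ≤ (Fintype.card κ) * ∑ m, ∑ m', ‖c m m'‖ ^ 2 := by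
        gcongr with m _
        exact Finset.single_le_sum (f := fun m' => ‖c m m'‖^2) (fun i _ => by positivity) (mem_univ m)
    _ = (Fintype.card κ) * ∑ m, ∑ m', Complex.normSq (c m m') := by
        congr 1; refine Finset.sum_congr rfl fun m _ => Finset.sum_congr rfl fun m' _ => ?_
        rw [Complex.normSq_eq_norm_sq]

lemma block_cs {ι κ P σ : Type*} [Fintype ι] [Fintype κ] [Fintype P] [Fintype σ]
    (e : ι × κ ≃ P) (u : P → ℂ) (v : σ → P → ℂ) :
    ∑ k : σ, Complex.normSq (∑ p, conj (u p) * v k p) ≤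
      (Fintype.card κ) * ∑ k : σ, ∑ m : κ, ∑ m' : κ,
        Complex.normSq (∑ i : ι, conj (u (e (i,m))) * v k (e (i,m'))) := by
  rw [Finset.mul_sum]
  refine Finset.sum_le_sum fun k _ => ?_
  have h : (∑ p, conj (u p) * v k p)
      = ∑ m : κ, ∑ i : ι, conj (u (e (i,m))) * v k (e (i,m)) := by
    rw [← Equiv.sum_comp e (fun p => conj (u p) * v k p), Fintype.sum_prod_type]
    exact Finset.sum_comm
  rw [h]
  exact cs_trace (fun m m' => ∑ i : ι, conj (u (e (i,m))) * v k (e (i,m')))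

lemma trace_rank_decomp {α σ τ : Type*} [Fintype α] [DecidableEq α] [Fintype σ] [DecidableEq σ] [Fintype τ]
    (O Wm : Matrix α α ℂ) (s : ℂ) (u : σ → α → ℂ) (v : τ → α → ℂ)
    (hO : ∀ r c, O r c = s * ∑ j, u j r * conj (u j c))
    (hw : ∀ p q, Wm p q = ∑ k, v k p * conj (v k q)) :
    (O * Wm).trace = s * ∑ j, ∑ k,
      ((Complex.normSq (∑ p, conj (u j p) * v k p) : ℂ)) := by
  classical
  set U : Matrix α σ ℂ := Matrix.of fun p j => u j p with hU
  set V : Matrix α τ ℂ := Matrix.of fun p k => v k p with hV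
  have hOm : O = s • (U * Uᴴ) := by
    ext r c
    simp [Matrix.mul_apply, hO, Matrix.conjTranspose_apply, Finset.mul_sum, Matrix.of_apply, hU, hV]
  have hWm : Wm = V * Vᴴ := by
    ext p q
    simp [Matrix.mul_apply, hw, Matrix.conjTranspose_apply, Matrix.of_apply, hU, hV]
  rw [hOm, hWm, Matrix.smul_mul, Matrix.trace_smul, smul_eq_mul]
  congr 1
  rw [Matrix.mul_assoc, Matrix.trace_mul_comm, ← Matrix.mul_assoc Uᴴ V Vᴴ, Matrix.mul_assoc (Uᴴ * V) Vᴴ U]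
  have h2 : Vᴴ * U = (Uᴴ * V)ᴴ := by simp
  rw [h2]
  set A := Uᴴ * V with hA
  have hAe : ∀ j k, A j k = ∑ p, conj (u j p) * v k p := by
    intro j k
    simp [hA, Matrix.mul_apply, Matrix.conjTranspose_apply, hU, hV]
  simp only [Matrix.trace, Matrix.diag_apply, Matrix.mul_apply, Matrix.conjTranspose_apply]
  refine Finset.sum_congr rfl fun j _ => Finset.sum_congr rfl fun k _ => ?_
  rw [← hAe j k, ← Complex.mul_conj]
  rfl

lemma sum_rot3 {A B C M : Type*} [AddCommMonoid M] [Fintype A] [Fintype B] [Fintype C]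
    (F : A → B → C → M) :
    ∑ x : A, ∑ y : B, ∑ z : C, F x y z = ∑ z : C, ∑ x : A, ∑ y : B, F x y z :=
  calc ∑ x : A, ∑ y : B, ∑ z : C, F x y z
      = ∑ x : A, ∑ z : C, ∑ y : B, F x y z :=
        Finset.sum_congr rfl fun _ _ => Finset.sum_comm
    _ = ∑ z : C, ∑ x : A, ∑ y : B, F x y z := Finset.sum_comm

lemma sum_rot3' {A B C M : Type*} [AddCommMonoid M] [Fintype A] [Fintype B] [Fintype C]
    (F : A → B → C → M) :
    ∑ x : A, ∑ y : B, ∑ z : C, F x y z = ∑ y : B, ∑ z : C, ∑ x : A, F x y z :=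
  (sum_rot3 fun y z x => F x y z).symm

lemma sum_deltaN {a b : Type*} [Fintype a] [DecidableEq a] [Fintype b] [DecidableEq b]
    {tN : ℕ} (Nk : Fin tN → Matrix b a ℂ)
    (hNe : ∀ x y : a, (∑ j, ∑ β, conj (Nk j β x) * Nk j β y) = if x = y then 1 else 0)
    (R : a → a → ℂ) (c : ℂ) :
    ∑ j, ∑ t : a × b, ∑ t' : a × b,
      conj (Nk j t.2 t.1) * Nk j t'.2 t'.1 * (R t.1 t'.1 * (c * (if t.2 = t'.2 then 1 else 0)))
      = c * ∑ x, R x x := by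
  have h1 : ∀ (j : Fin tN) (t : a × b), (∑ t' : a × b,
      conj (Nk j t.2 t.1) * Nk j t'.2 t'.1 * (R t.1 t'.1 * (c * (if t.2 = t'.2 then 1 else 0))))
      = ∑ y : a, conj (Nk j t.2 t.1) * Nk j t.2 y * (R t.1 y * c) := by
    intro j t
    rw [Fintype.sum_prod_type]
    refine Finset.sum_congr rfl fun y _ => ?_
    simp [mul_ite, ite_mul, Finset.sum_ite_eq, Finset.sum_ite_eq']
  simp only [h1]
  have h2 : (∑ j, ∑ t : a × b, ∑ y : a, conj (Nk j t.2 t.1) * Nk j t.2 y * (R t.1 y * c))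
      = ∑ x : a, ∑ y : a, (∑ j, ∑ β : b, conj (Nk j β x) * Nk j β y) * (R x y * c) := by
    simp only [Fintype.sum_prod_type, Finset.sum_mul]
    rw [Finset.sum_comm]
    refine Finset.sum_congr rfl fun x _ => ?_
    exact sum_rot3 _
  rw [h2]
  simp only [hNe, ite_mul, one_mul, zero_mul, Finset.sum_ite_eq, Finset.sum_ite_eq',
    Finset.mem_univ, if_true]
  rw [Finset.mul_sum]
  exact Finset.sum_congr rfl fun x _ => mul_comm _ _

lemma sum_deltaN2 {a b κ : Type*} [Fintype a] [DecidableEq a] [Fintype b] [DecidableEq b]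
    [Fintype κ] [DecidableEq κ]
    {tN : ℕ} (Nk : Fin tN → Matrix b a ℂ)
    (hNe : ∀ x y : a, (∑ j, ∑ β, conj (Nk j β x) * Nk j β y) = if x = y then 1 else 0)
    (T : (b × κ) → (b × κ) → ℂ) (c q : ℂ)
    (hQ : ∀ β β' : b, (∑ m : κ, T (β, m) (β', m)) = q * (if β = β' then 1 else 0)) :
    ∑ j, ∑ x : a, ∑ t : b × κ, ∑ t' : b × κ,
      conj (Nk j t.1 x) * Nk j t'.1 x * (c * ((if t.2 = t'.2 then 1 else 0) * T t t'))
      = (Fintype.card a : ℂ) * (c * q) := by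
  have h1 : ∀ (j : Fin tN) (x : a) (t : b × κ), (∑ t' : b × κ,
      conj (Nk j t.1 x) * Nk j t'.1 x * (c * ((if t.2 = t'.2 then 1 else 0) * T t t')))
      = ∑ β' : b, conj (Nk j t.1 x) * Nk j β' x * (c * T t (β', t.2)) := by
    intro j x t
    rw [Fintype.sum_prod_type]
    refine Finset.sum_congr rfl fun β' _ => ?_
    simp [mul_ite, ite_mul, Finset.sum_ite_eq, Finset.sum_ite_eq']
  simp only [h1]
  have h2 : ∀ (j : Fin tN) (x : a), (∑ t : b × κ, ∑ β' : b,
      conj (Nk j t.1 x) * Nk j β' x * (c * T t (β', t.2)))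
      = ∑ β : b, ∑ β' : b, conj (Nk j β x) * Nk j β' x * (c * (q * (if β = β' then 1 else 0))) := by
    intro j x
    rw [Fintype.sum_prod_type]
    refine Finset.sum_congr rfl fun β _ => ?_
    rw [Finset.sum_comm]
    refine Finset.sum_congr rfl fun β' _ => ?_
    rw [← hQ β β', Finset.mul_sum, Finset.mul_sum]
  simp only [h2]
  have h3 : ∀ (j : Fin tN) (x : a), (∑ β : b, ∑ β' : b,
      conj (Nk j β x) * Nk j β' x * (c * (q * (if β = β' then 1 else 0))))
      = ∑ β : b, conj (Nk j β x) * Nk j β x * (c * q) := by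
    intro j x
    refine Finset.sum_congr rfl fun β _ => ?_
    simp [mul_ite, ite_mul, Finset.sum_ite_eq, Finset.sum_ite_eq']
  simp only [h3]
  rw [Finset.sum_comm]
  have h4 : ∀ x : a, (∑ j, ∑ β : b, conj (Nk j β x) * Nk j β x * (c * q)) = c * q := by
    intro x
    have : (∑ j, ∑ β : b, conj (Nk j β x) * Nk j β x * (c * q))
        = (∑ j, ∑ β : b, conj (Nk j β x) * Nk j β x) * (c * q) := by
      rw [Finset.sum_mul]
      exact Finset.sum_congr rfl fun j _ => by rw [Finset.sum_mul]
    rw [this, hNe x x]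
    simp
  simp only [h4]
  simp [Finset.card_univ, mul_comm]

lemma sum_mul_conj_sum {τ ι : Type*} [Fintype τ] [Fintype ι] (A : ι → ℂ) (f : τ → ι → ℂ) :
    ∑ k : τ, (∑ t, A t * f k t) * conj (∑ t', A t' * f k t')
      = ∑ t, ∑ t', A t * conj (A t') * (∑ k : τ, f k t * conj (f k t')) := by
  have h1 : ∀ k : τ, (∑ t, A t * f k t) * conj (∑ t', A t' * f k t')
      = ∑ t, ∑ t', A t * conj (A t') * (f k t * conj (f k t')) := by
    intro k
    rw [map_sum, Finset.sum_mul_sum]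
    exact Finset.sum_congr rfl fun t _ => Finset.sum_congr rfl fun t' _ => by
      rw [_root_.map_mul]; ring
  simp only [h1]
  rw [sum_rot3' fun k t t' => A t * conj (A t') * (f k t * conj (f k t'))]
  exact Finset.sum_congr rfl fun t _ => Finset.sum_congr rfl fun t' _ => by
    rw [← Finset.mul_sum]



/-- First level SDP relaxation bound: for any feasible `W_{AĀBB̄}` (PSD, unit trace,
`W_{ABB̄} = (1_A/M) ⊗ W_{BB̄}` and `W_{AĀB} = W_{AĀ} ⊗ (1_B/d_B)`), the objective
`d_Ā d_B·Tr[(J^N ⊗ Φ)·W]` is at most `min{1, (d_Ā/M)²}`. -/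
theorem sdp_first_level_bound {a b : Type*} [Fintype a] [DecidableEq a]
    [Fintype b] [DecidableEq b] (M : ℕ) (hM : 0 < M)
    {tN : ℕ} (Nk : Fin tN → Matrix b a ℂ) (hN : ∑ j, (Nk j)ᴴ * Nk j = 1)
    (W : Matrix ((Fin M × a) × (b × Fin M)) ((Fin M × a) × (b × Fin M)) ℂ)
    (hW : W.PosSemidef) (htr : W.trace = 1)
    (hW1 : margAbar W = ((M : ℂ))⁻¹ • ((1 : Matrix (Fin M) (Fin M) ℂ) ⊗ₖ ptraceA W))
    (hW2 : margBbar W = ptraceB W ⊗ₖ (((Fintype.card b : ℂ))⁻¹ • (1 : Matrix b b ℂ))) :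
    (Fintype.card a : ℝ) * (Fintype.card b : ℝ) * ((qecOp M Nk * W).trace).re ≤
      min 1 (((Fintype.card a : ℝ) / M)^2) := by
  classical
  -- nonemptiness
  rcases isEmpty_or_nonempty a with ha | ha
  · exfalso
    have h0 : W.trace = 0 := by
      rw [Matrix.trace, Finset.univ_eq_empty, Finset.sum_empty]
    rw [h0] at htr; exact zero_ne_one htr
  rcases isEmpty_or_nonempty b with hb | hb
  · exfalso
    have h0 : W.trace = 0 := by
      rw [Matrix.trace, Finset.univ_eq_empty, Finset.sum_empty]
    rw [h0] at htr; exact zero_ne_one htr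
  set da := Fintype.card a with hda
  set db := Fintype.card b with hdb
  have hdap : 0 < da := Fintype.card_pos
  have hdbp : 0 < db := Fintype.card_pos
  -- square-root decomposition of W
  set S := (open scoped MatrixOrder in CFC.sqrt W) with hS
  set v : ((Fin M × a) × (b × Fin M)) → ((Fin M × a) × (b × Fin M)) → ℂ :=
    fun k p => S p k with hv
  have hWpq : ∀ p q, W p q = ∑ k, v k p * conj (v k q) := by
    intro p q
    conv_lhs => rw [← (open scoped MatrixOrder in CFC.sqrt_mul_sqrt_self W hW.nonneg)]
    rw [Matrix.mul_apply]
    refine Finset.sum_congr rfl fun k _ => ?_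
    congr 1
    have h := congrFun (congrFun (open scoped MatrixOrder in (CFC.sqrt_nonneg W).posSemidef).1 k) q
    simpa [Matrix.conjTranspose_apply] using h.symm
  -- rank decomposition of the objective operator
  set u : Fin tN → ((Fin M × a) × (b × Fin M)) → ℂ :=
    fun j r => Nk j r.2.1 r.1.2 * (if r.1.1 = r.2.2 then 1 else 0) with hu
  have hO : ∀ r c, qecOp M Nk r c = ((da : ℂ) * M)⁻¹ * ∑ j, u j r * conj (u j c) := by
    intro r c
    by_cases h1 : r.1.1 = r.2.2 <;> by_cases h2 : c.1.1 = c.2.2 <;>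
      simp [qecOp, choiState, maxEnt, h1, h2, Fintype.card_fin, mul_inv, hu, hda,
        Finset.mul_sum, mul_comm, mul_assoc, mul_left_comm, Complex.star_def]
  have hNe : ∀ x y : a, (∑ j, ∑ β, conj (Nk j β x) * Nk j β y)
      = if x = y then 1 else 0 := by
    intro x y
    have h := congrFun (congrFun hN x) y
    rw [Matrix.sum_apply] at h
    simp only [Matrix.mul_apply, Matrix.conjTranspose_apply, Matrix.one_apply] at h
    simpa using h
  -- trace as sum of squares
  have hT := trace_rank_decomp (qecOp M Nk) W ((da : ℂ) * M)⁻¹ u v hO hWpq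
  set Z : ℝ := ∑ j, ∑ k, Complex.normSq (∑ p, conj (u j p) * v k p) with hZ
  have hre : ((qecOp M Nk * W).trace).re = ((da : ℝ) * M)⁻¹ * Z := by
    have : (qecOp M Nk * W).trace = ((((da : ℝ) * M)⁻¹ * Z : ℝ) : ℂ) := by
      rw [hT, hZ]
      push_cast
      ring
    rw [this, Complex.ofReal_re]
  have hZnn : 0 ≤ Z := by
    rw [hZ]
    refine Finset.sum_nonneg fun j _ => Finset.sum_nonneg fun k _ => Complex.normSq_nonneg _
  -- marginal identities in entrywise form
  have hmarg : ∀ (p q : Fin M × a) (β β' : b),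
      (∑ m' : Fin M, W (p, (β, m')) (q, (β', m')))
        = ptraceB W p q * ((db : ℂ)⁻¹ * (if β = β' then 1 else 0)) := by
    intro p q β β'
    have h := congrFun (congrFun hW2 (p, β)) (q, β')
    simp only [margBbar, Matrix.of_apply, Matrix.kroneckerMap_apply, Matrix.smul_apply,
      Matrix.one_apply, smul_eq_mul] at h
    simpa using h
  have hmargA : ∀ (A A' : Fin M) (x x' : b × Fin M),
      (∑ y : a, W ((A, y), x) ((A', y), x'))
        = (M : ℂ)⁻¹ * ((if A = A' then 1 else 0) * ptraceA W x x') := by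
    intro A A' x x'
    have h := congrFun (congrFun hW1 (A, x)) (A', x')
    simp only [margAbar, Matrix.of_apply, Matrix.kroneckerMap_apply, Matrix.smul_apply,
      Matrix.one_apply, smul_eq_mul] at h
    simpa [mul_assoc] using h
  have htrB : (∑ p : Fin M × a, ptraceB W p p) = 1 := by
    have : (∑ p : Fin M × a, ptraceB W p p) = W.trace := by
      simp only [Matrix.trace, Matrix.diag_apply, ptraceB, Matrix.of_apply,
        Fintype.sum_prod_type]
    rw [this, htr]
  have hQ : ∀ β β' : b, (∑ m : Fin M, ptraceA W (β, m) (β', m))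
      = (db : ℂ)⁻¹ * (if β = β' then 1 else 0) := by
    intro β β'
    have h1 : (∑ m : Fin M, ptraceA W (β, m) (β', m))
        = ∑ p : Fin M × a, ∑ m : Fin M, W (p, (β, m)) (p, (β', m)) := by
      simp only [ptraceA, Matrix.of_apply]
      exact Finset.sum_comm
    rw [h1]
    have h2 : ∀ p : Fin M × a, (∑ m : Fin M, W (p, (β, m)) (p, (β', m)))
        = ptraceB W p p * ((db : ℂ)⁻¹ * (if β = β' then 1 else 0)) := fun p => hmarg p p β β'
    simp only [h2]
    rw [← Finset.sum_mul, htrB, one_mul]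
  ------------------------------------------------------------------ bound 1
  set e1 := Equiv.prodAssoc (Fin M × a) b (Fin M) with he1
  set cc1 : Fin tN → ((Fin M × a) × (b × Fin M)) → Fin M → Fin M → ℂ :=
    fun j k m m' => ∑ t : a × b, conj (Nk j t.2 t.1) * v k ((m, t.1), (t.2, m')) with hcc1
  have hinner1 : ∀ j k (m m' : Fin M),
      (∑ i : (Fin M × a) × b, conj (u j (e1 (i, m))) * v k (e1 (i, m'))) = cc1 j k m m' := by
    intro j k m m'
    rw [Fintype.sum_prod_type, Fintype.sum_prod_type]
    simp only [hcc1]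
    conv_rhs => rw [Fintype.sum_prod_type]
    simp only [he1, Equiv.prodAssoc_apply, hu]
    simp [apply_ite (starRingEnd ℂ), mul_ite, ite_mul, mul_zero, zero_mul, mul_one,
      Finset.sum_ite_eq, Finset.sum_ite_eq']
  set Y1 : ℝ := ∑ j, ∑ k, ∑ m : Fin M, ∑ m' : Fin M, Complex.normSq (cc1 j k m m') with hY1def
  have hZ1 : Z ≤ (M : ℝ) * Y1 := by
    rw [hZ, hY1def]
    calc (∑ j, ∑ k, Complex.normSq (∑ p, conj (u j p) * v k p))
        ≤ ∑ j, ((Fintype.card (Fin M) : ℝ) * ∑ k, ∑ m : Fin M, ∑ m' : Fin M,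
            Complex.normSq (∑ i : (Fin M × a) × b, conj (u j (e1 (i, m))) * v k (e1 (i, m')))) :=
          Finset.sum_le_sum fun j _ => block_cs e1 (u j) v
      _ = (M : ℝ) * ∑ j, ∑ k, ∑ m : Fin M, ∑ m' : Fin M, Complex.normSq (cc1 j k m m') := by
          rw [Finset.mul_sum]
          exact Finset.sum_congr rfl fun j _ => by
            rw [Fintype.card_fin]
            congr 1
            refine Finset.sum_congr rfl fun k _ => Finset.sum_congr rfl fun m _ =>
              Finset.sum_congr rfl fun m' _ => ?_
            rw [hinner1]
  have hC1 : (∑ j, ∑ k, ∑ m : Fin M, ∑ m' : Fin M, cc1 j k m m' * conj (cc1 j k m m'))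
      = (db : ℂ)⁻¹ := by
    have s1 : ∀ j, (∑ k, ∑ m : Fin M, ∑ m' : Fin M, cc1 j k m m' * conj (cc1 j k m m'))
        = ∑ m : Fin M, ∑ m' : Fin M, ∑ k, cc1 j k m m' * conj (cc1 j k m m') := fun j =>
      sum_rot3' fun k m m' => cc1 j k m m' * conj (cc1 j k m m')
    simp only [s1]
    have s2 : ∀ j (m m' : Fin M), (∑ k, cc1 j k m m' * conj (cc1 j k m m'))
        = ∑ t : a × b, ∑ t' : a × b, conj (Nk j t.2 t.1) * Nk j t'.2 t'.1 *
            W ((m, t.1), (t.2, m')) ((m, t'.1), (t'.2, m')) := by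
      intro j m m'
      simp only [hcc1]
      rw [sum_mul_conj_sum (fun t : a × b => conj (Nk j t.2 t.1))
        (fun k (t : a × b) => v k ((m, t.1), (t.2, m')))]
      refine Finset.sum_congr rfl fun t _ => Finset.sum_congr rfl fun t' _ => ?_
      rw [Complex.conj_conj, ← hWpq]
    simp only [s2]
    have s3 : ∀ j (m : Fin M), (∑ m' : Fin M, ∑ t : a × b, ∑ t' : a × b,
          conj (Nk j t.2 t.1) * Nk j t'.2 t'.1 *
            W ((m, t.1), (t.2, m')) ((m, t'.1), (t'.2, m')))
        = ∑ t : a × b, ∑ t' : a × b, conj (Nk j t.2 t.1) * Nk j t'.2 t'.1 *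
            (ptraceB W (m, t.1) (m, t'.1) * ((db : ℂ)⁻¹ * (if t.2 = t'.2 then 1 else 0))) := by
      intro j m
      rw [(sum_rot3 fun (t : a × b) (t' : a × b) (m' : Fin M) =>
        conj (Nk j t.2 t.1) * Nk j t'.2 t'.1 *
          W ((m, t.1), (t.2, m')) ((m, t'.1), (t'.2, m'))).symm]
      refine Finset.sum_congr rfl fun t _ => Finset.sum_congr rfl fun t' _ => ?_
      rw [← Finset.mul_sum, hmarg (m, t.1) (m, t'.1) t.2 t'.2]
    simp only [s3]
    rw [Finset.sum_comm]
    have s4 : ∀ m : Fin M, (∑ j, ∑ t : a × b, ∑ t' : a × b,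
          conj (Nk j t.2 t.1) * Nk j t'.2 t'.1 *
            (ptraceB W (m, t.1) (m, t'.1) * ((db : ℂ)⁻¹ * (if t.2 = t'.2 then 1 else 0))))
        = (db : ℂ)⁻¹ * ∑ x : a, ptraceB W (m, x) (m, x) := fun m =>
      sum_deltaN Nk hNe (fun x y => ptraceB W (m, x) (m, y)) (db : ℂ)⁻¹
    simp only [s4]
    rw [← Finset.mul_sum, ← Fintype.sum_prod_type (f := fun p : Fin M × a => ptraceB W p p),
      htrB, mul_one]
  have hY1 : Y1 = (db : ℝ)⁻¹ := by
    have hcast : ((Y1 : ℝ) : ℂ) = ((db : ℝ)⁻¹ : ℝ) := by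
      rw [hY1def]
      push_cast
      simp only [← Complex.mul_conj]
      exact hC1
    exact_mod_cast hcast
  ------------------------------------------------------------------ bound 2
  set e2 : ((Fin M × (b × Fin M)) × a) ≃ ((Fin M × a) × (b × Fin M)) :=
    ⟨fun p => ((p.1.1, p.2), p.1.2), fun q => ((q.1.1, q.2), q.1.2),
      fun p => rfl, fun q => rfl⟩ with he2
  set cc2 : Fin tN → ((Fin M × a) × (b × Fin M)) → a → a → ℂ :=
    fun j k x y => ∑ t : b × Fin M, conj (Nk j t.1 x) * v k ((t.2, y), t) with hcc2
  have hinner2 : ∀ j k (x y : a),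
      (∑ i : Fin M × (b × Fin M), conj (u j (e2 (i, x))) * v k (e2 (i, y))) = cc2 j k x y := by
    intro j k x y
    rw [Fintype.sum_prod_type]
    simp only [hcc2, he2, Equiv.coe_fn_mk, hu]
    simp only [apply_ite (starRingEnd ℂ), mul_ite, ite_mul, mul_zero, zero_mul, mul_one, _root_.map_one,
      _root_.map_zero]
    rw [Finset.sum_comm]
    simp [Finset.sum_ite_eq, Finset.sum_ite_eq']
  set Y2 : ℝ := ∑ j, ∑ k, ∑ x : a, ∑ y : a, Complex.normSq (cc2 j k x y) with hY2def
  have hZ2 : Z ≤ (da : ℝ) * Y2 := by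
    rw [hZ, hY2def]
    calc (∑ j, ∑ k, Complex.normSq (∑ p, conj (u j p) * v k p))
        ≤ ∑ j, ((Fintype.card a : ℝ) * ∑ k, ∑ x : a, ∑ y : a,
            Complex.normSq (∑ i : Fin M × (b × Fin M), conj (u j (e2 (i, x))) * v k (e2 (i, y)))) :=
          Finset.sum_le_sum fun j _ => block_cs e2 (u j) v
      _ = (da : ℝ) * ∑ j, ∑ k, ∑ x : a, ∑ y : a, Complex.normSq (cc2 j k x y) := by
          rw [Finset.mul_sum]
          exact Finset.sum_congr rfl fun j _ => by
            rw [← hda]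
            congr 1
            refine Finset.sum_congr rfl fun k _ => Finset.sum_congr rfl fun x _ =>
              Finset.sum_congr rfl fun y _ => ?_
            rw [hinner2]
  have hC2 : (∑ j, ∑ k, ∑ x : a, ∑ y : a, cc2 j k x y * conj (cc2 j k x y))
      = (da : ℂ) * ((M : ℂ)⁻¹ * (db : ℂ)⁻¹) := by
    have s1 : ∀ j, (∑ k, ∑ x : a, ∑ y : a, cc2 j k x y * conj (cc2 j k x y))
        = ∑ x : a, ∑ y : a, ∑ k, cc2 j k x y * conj (cc2 j k x y) := fun j =>
      sum_rot3' fun k x y => cc2 j k x y * conj (cc2 j k x y)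
    simp only [s1]
    have s2 : ∀ j (x y : a), (∑ k, cc2 j k x y * conj (cc2 j k x y))
        = ∑ t : b × Fin M, ∑ t' : b × Fin M, conj (Nk j t.1 x) * Nk j t'.1 x *
            W ((t.2, y), t) ((t'.2, y), t') := by
      intro j x y
      simp only [hcc2]
      rw [sum_mul_conj_sum (fun t : b × Fin M => conj (Nk j t.1 x))
        (fun k (t : b × Fin M) => v k ((t.2, y), t))]
      refine Finset.sum_congr rfl fun t _ => Finset.sum_congr rfl fun t' _ => ?_
      rw [Complex.conj_conj, ← hWpq]
    simp only [s2]
    have s3 : ∀ j (x : a), (∑ y : a, ∑ t : b × Fin M, ∑ t' : b × Fin M,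
          conj (Nk j t.1 x) * Nk j t'.1 x * W ((t.2, y), t) ((t'.2, y), t'))
        = ∑ t : b × Fin M, ∑ t' : b × Fin M, conj (Nk j t.1 x) * Nk j t'.1 x *
            ((M : ℂ)⁻¹ * ((if t.2 = t'.2 then 1 else 0) * ptraceA W t t')) := by
      intro j x
      rw [(sum_rot3 fun (t : b × Fin M) (t' : b × Fin M) (y : a) =>
        conj (Nk j t.1 x) * Nk j t'.1 x * W ((t.2, y), t) ((t'.2, y), t')).symm]
      refine Finset.sum_congr rfl fun t _ => Finset.sum_congr rfl fun t' _ => ?_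
      rw [← Finset.mul_sum, hmargA t.2 t'.2 t t']
    simp only [s3]
    exact sum_deltaN2 Nk hNe (ptraceA W) (M : ℂ)⁻¹ (db : ℂ)⁻¹ hQ
  have hY2 : Y2 = (da : ℝ) * ((M : ℝ)⁻¹ * (db : ℝ)⁻¹) := by
    have hcast : ((Y2 : ℝ) : ℂ) = (((da : ℝ) * ((M : ℝ)⁻¹ * (db : ℝ)⁻¹) : ℝ) : ℂ) := by
      rw [hY2def]
      push_cast
      simp only [← Complex.mul_conj]
      exact hC2
    exact_mod_cast hcast
  rw [hre, le_min_iff]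
  have hMp : (0:ℝ) < M := by exact_mod_cast hM
  have hdap' : (0:ℝ) < da := by exact_mod_cast hdap
  have hdbp' : (0:ℝ) < db := by exact_mod_cast hdbp
  have hMne : (M:ℝ) ≠ 0 := ne_of_gt hMp
  have hdane : (da:ℝ) ≠ 0 := ne_of_gt hdap'
  have hdbne : (db:ℝ) ≠ 0 := ne_of_gt hdbp'
  constructor
  · have h1 : Z ≤ (M:ℝ) * (db:ℝ)⁻¹ := by rw [hY1] at hZ1; exact hZ1
    calc (da:ℝ) * (db:ℝ) * (((da:ℝ) * M)⁻¹ * Z)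
        ≤ (da:ℝ) * (db:ℝ) * (((da:ℝ) * M)⁻¹ * ((M:ℝ) * (db:ℝ)⁻¹)) := by gcongr
      _ = 1 := by field_simp
  · have h2 : Z ≤ (da:ℝ) * ((da:ℝ) * ((M:ℝ)⁻¹ * (db:ℝ)⁻¹)) := by rw [hY2] at hZ2; exact hZ2
    calc (da:ℝ) * (db:ℝ) * (((da:ℝ) * M)⁻¹ * Z)
        ≤ (da:ℝ) * (db:ℝ) * (((da:ℝ) * M)⁻¹ * ((da:ℝ) * ((da:ℝ) * ((M:ℝ)⁻¹ * (db:ℝ)⁻¹)))) := by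
          gcongr
      _ = ((da:ℝ) / M)^2 := by field_simp
end
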